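/- arXiv:math/0502108 — 8 statements merged into one kernel-verified Lean document; each statement's English description precedes it below -/
import Mathlib

section
/- Let n ≥ 1 and let P be an n-simplex in E^n whose reflection group G_P is discrete. Then no mirror of G_P decomposing P is parallel to a facet of P. Precisely: there is no affine hyperplane H in E^n such that the reflection in H belongs to G_P, H has the same direction as (i.e., is parallel to) one of the facet hyperplanes of P, and H meets the interior of P (the interior of the convex hull of the vertices of P). -/
open scoped RealInnerProductSpace

noncomputable section

/-- Euclidean `n`-space. -/
abbrev Euc (n : ℕ) : Type := EuclideanSpace ℝ (Fin n)

/-- The `i`-th facet hyperplane of the simplex with vertices `p 0, …, p n`: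
the affine span of the vertices other than `p i`. -/
def facetHyperplane {n : ℕ} (p : Fin (n + 1) → Euc n) (i : Fin (n + 1)) :
    AffineSubspace ℝ (Euc n) :=
  affineSpan ℝ (p '' {j | j ≠ i})

/-- `g` is the reflection of Euclidean `n`-space in the affine subspace `H`:
an isometry different from the identity which fixes `H` pointwise.  (When `H` is an
affine hyperplane this characterizes the reflection in `H`.) -/
def IsReflectionIn {n : ℕ} (g : Euc n ≃ᵢ Euc n) (H : AffineSubspace ℝ (Euc n)) : Prop :=
  (∀ x ∈ H, g x = x) ∧ g ≠ IsometryEquiv.refl (Euc n)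

/-- The reflection group of the simplex with vertices `p 0, …, p n`: the subgroup of the
isometry group of Euclidean `n`-space generated by the reflections in the `n + 1`
facet hyperplanes. -/
def reflGroup {n : ℕ} (p : Fin (n + 1) → Euc n) : Subgroup (Euc n ≃ᵢ Euc n) :=
  Subgroup.closure {g | ∃ i : Fin (n + 1), IsReflectionIn g (facetHyperplane p i)}

/-- A subgroup of the isometry group of Euclidean `n`-space acts properly discontinuously
(is discrete) if for all compact `K`, `L` only finitely many of its elements move `K`
so that it meets `L`. -/
def ProperlyDiscont {n : ℕ} (G : Subgroup (Euc n ≃ᵢ Euc n)) : Prop :=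
  ∀ K L : Set (Euc n), IsCompact K → IsCompact L →
    {g : Euc n ≃ᵢ Euc n | g ∈ G ∧ (g '' K ∩ L).Nonempty}.Finite

/-- `u` is an outward unit normal to the `i`-th facet of the simplex `p`. -/
def IsOutwardNormal {n : ℕ} (p : Fin (n + 1) → Euc n) (i : Fin (n + 1)) (u : Euc n) : Prop :=
  ‖u‖ = 1 ∧ (∀ v ∈ (facetHyperplane p i).direction, ⟪u, v⟫ = 0) ∧
    ∀ q ∈ facetHyperplane p i, ⟪u, p i - q⟫ < 0

/-!
Let `u` be the unit normal of the facet `F` opposite the vertex `p i`, oriented towards `p i`, let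
`h > 0` be the distance of `p i` from `F`, and suppose that the reflection `ρ` in the hyperplane
parallel to `F` at distance `a ∈ (0, h)` from `p i` lies in `G_P`. Since isometries are affine, the
displacement `g ↦ g (p i) - p i` is a cocycle for the linear parts of `G_P`; on the generating
reflections it is `-2h u` or `0`. Hence whenever the translation by `c u` lies in `G_P`, so does
the translation by `(c / 2h) (g (p i) - p i)` for every `g ∈ G_P`, and for `g = ρ` this is the
translation by `-(a / h) c u`. Composing the reflection in `F` with `ρ` gives the translation by
`2 (a - h) u`, so `G_P` contains the translations by `(a / h) ^ k 2 (a - h) u` for all `k`: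
infinitely many isometries moving `0` into a fixed ball, contradicting discreteness.
-/

namespace IsometryEquiv

variable {E : Type*} [NormedAddCommGroup E]

theorem addLeft_add (v w : E) : addLeft (v + w) = addLeft v * addLeft w :=
  ext fun x => add_assoc v w x

theorem addLeft_neg (v : E) : addLeft (-v) = (addLeft v)⁻¹ :=
  ext fun x => by rw [← addLeft_symm]; rfl

theorem addLeft_zero : addLeft (0 : E) = 1 :=
  ext fun x => zero_add x

variable [NormedSpace ℝ E]

theorem toRealLinearIsometryEquiv_sub (g : E ≃ᵢ E) (x y : E) :
    g.toRealLinearIsometryEquiv (x - y) = g x - g y := by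
  have h := g.toRealAffineIsometryEquiv.map_vsub
  simp only [vsub_eq_sub, coeFn_toRealAffineIsometryEquiv] at h
  rw [toRealLinearIsometryEquiv_apply, ← h, sub_zero, h]

theorem mul_addLeft_mul_inv (g : E ≃ᵢ E) (v : E) :
    g * addLeft v * g⁻¹ = addLeft (g.toRealLinearIsometryEquiv v) := by
  ext x
  have h := g.toRealLinearIsometryEquiv_sub (v + g⁻¹ x) (g⁻¹ x)
  rw [add_sub_cancel_right, apply_inv_self] at h
  rw [mul_apply, mul_apply, addLeft_apply, addLeft_apply, h, sub_add_cancel]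

theorem addLeft_smul_sub_mem_closure {S : Set (E ≃ᵢ E)} (x : E) (c : ℝ)
    (hS : ∀ s ∈ S, addLeft (c • (s x - x)) ∈ Subgroup.closure S) {g : E ≃ᵢ E}
    (hg : g ∈ Subgroup.closure S) : addLeft (c • (g x - x)) ∈ Subgroup.closure S := by
  induction hg using Subgroup.closure_induction with
  | mem s hs => exact hS s hs
  | one => simp [addLeft_zero]
  | mul g₁ g₂ hg₁ _ ih₁ ih₂ =>
    have hsplit : c • ((g₁ * g₂) x - x) =
        g₁.toRealLinearIsometryEquiv (c • (g₂ x - x)) + c • (g₁ x - x) := by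
      rw [map_smul, toRealLinearIsometryEquiv_sub, mul_apply, ← smul_add, sub_add_sub_cancel]
    rw [hsplit, addLeft_add, ← mul_addLeft_mul_inv]
    exact mul_mem (mul_mem (mul_mem hg₁ ih₂) (inv_mem hg₁)) ih₁
  | inv g hg ih =>
    have hsplit : c • (g⁻¹ x - x) = -g⁻¹.toRealLinearIsometryEquiv (c • (g x - x)) := by
      rw [map_smul, toRealLinearIsometryEquiv_sub, inv_apply_self, ← smul_neg, neg_sub]
    rw [hsplit, addLeft_neg, ← mul_addLeft_mul_inv, inv_inv]
    exact inv_mem (mul_mem (mul_mem (inv_mem hg) ih) hg)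

end IsometryEquiv

theorem ContinuousLinearMap.apply_lt_of_mem_interior_convexHull {E : Type*} [AddCommGroup E]
    [TopologicalSpace E] [ContinuousAdd E] [Module ℝ E] [ContinuousSMul ℝ E]
    {f : StrongDual ℝ E} (hf : f ≠ 0) {s : Set E} {c : ℝ} (hs : ∀ y ∈ s, f y ≤ c) {x : E}
    (hx : x ∈ interior (convexHull ℝ s)) : f x < c := by
  have hhull : convexHull ℝ s ⊆ {y | f y ≤ c} :=
    convexHull_min hs (convex_halfSpace_le f.toLinearMap.isLinear c)
  have himage : f '' interior (convexHull ℝ s) ⊆ interior (Set.Iic c) :=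
    interior_maximal (Set.image_subset_iff.mpr fun y hy => hhull (interior_subset hy))
      (f.isOpenMap_of_ne_zero hf _ isOpen_interior)
  rw [interior_Iic] at himage
  exact himage ⟨x, hx, rfl⟩

section InnerProductSpace

variable {E : Type*} [NormedAddCommGroup E] [InnerProductSpace ℝ E] {u : E}

theorem IsometryEquiv.mul_eq_addLeft_of_parallel_mirrors (hu : ‖u‖ = 1) {z₁ z₂ : E}
    {g₁ g₂ : E ≃ᵢ E} (h₁ : ∀ y, g₁ y = y - (2 * ⟪u, y - z₁⟫) • u)
    (h₂ : ∀ y, g₂ y = y - (2 * ⟪u, y - z₂⟫) • u) :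
    g₁ * g₂ = IsometryEquiv.addLeft ((2 * ⟪u, z₁ - z₂⟫) • u) := by
  have huu : ⟪u, u⟫ = 1 := by rw [real_inner_self_eq_norm_sq, hu, one_pow]
  ext y
  rw [IsometryEquiv.mul_apply, h₁, h₂, IsometryEquiv.addLeft_apply]
  simp only [inner_sub_right, real_inner_smul_right, huu]
  module

theorem LinearIsometryEquiv.eq_id_or_eq_reflection (L : E ≃ₗᵢ[ℝ] E) (hu : ‖u‖ = 1)
    (hL : ∀ w ∈ (ℝ ∙ u)ᗮ, L w = w) : (∀ v, L v = v) ∨ ∀ v, L v = v - (2 * ⟪u, v⟫) • u := by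
  have huu : ⟪u, u⟫ = 1 := by rw [real_inner_self_eq_norm_sq, hu, one_pow]
  have hLu : L u ∈ ℝ ∙ u := by
    rw [← Submodule.orthogonal_orthogonal (ℝ ∙ u), Submodule.mem_orthogonal]
    intro w hw
    rw [← hL w hw, L.inner_map_map, ← Submodule.mem_orthogonal_singleton_iff_inner_left.mp hw]
  obtain ⟨α, hα⟩ := Submodule.mem_span_singleton.mp hLu
  have hα1 : α = 1 ∨ α = -1 := by
    have hnorm := L.norm_map u
    rw [← hα, norm_smul, hu, mul_one, Real.norm_eq_abs] at hnorm
    exact (abs_eq zero_le_one).mp hnorm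
  have hL' (v : E) : L v = v + ((α - 1) * ⟪u, v⟫) • u := by
    have hv : v - ⟪u, v⟫ • u ∈ (ℝ ∙ u)ᗮ := by
      rw [Submodule.mem_orthogonal_singleton_iff_inner_right, inner_sub_right,
        real_inner_smul_right, huu, mul_one, sub_self]
    have hLv := hL _ hv
    rw [map_sub, map_smul, ← hα, sub_eq_iff_eq_add] at hLv
    rw [hLv]
    module
  rcases hα1 with rfl | rfl
  · exact .inl fun v => by simp [hL' v]
  · exact .inr fun v => by rw [hL' v]; module

theorem Submodule.exists_unit_normal_of_finrank_orthogonal_eq_one {K : Submodule ℝ E}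
    [K.HasOrthogonalProjection] (hK : Module.finrank ℝ Kᗮ = 1) {x : E} (hx : x ∉ K) :
    ∃ u : E, ‖u‖ = 1 ∧ K = (ℝ ∙ u)ᗮ ∧ 0 < ⟪u, x⟫ := by
  set e := x - K.starProjection x
  have he : e ∈ Kᗮ := K.sub_starProjection_mem_orthogonal x
  have he0 : e ≠ 0 := fun h => hx (sub_eq_zero.mp h ▸ K.starProjection_apply_mem x)
  have hex : ⟪e, x⟫ = ‖e‖ ^ 2 := by
    have : ⟪e, K.starProjection x⟫ = 0 :=
      (K.mem_orthogonal' e).mp he _ (K.starProjection_apply_mem x)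
    rw [← real_inner_self_eq_norm_sq, inner_sub_right, this, sub_zero]
  have hpos : 0 < ‖e‖ := norm_pos_iff.mpr he0
  have : FiniteDimensional ℝ Kᗮ := Module.finite_of_finrank_eq_succ hK
  have hspan : ℝ ∙ (‖e‖⁻¹ • e) = Kᗮ :=
    Submodule.eq_of_le_of_finrank_le
      ((Submodule.span_singleton_le_iff_mem _ _).mpr (Kᗮ.smul_mem _ he))
      (by rw [hK, finrank_span_singleton (smul_ne_zero (inv_ne_zero hpos.ne') he0)])
  refine ⟨‖e‖⁻¹ • e, ?_, by rw [hspan, K.orthogonal_orthogonal], ?_⟩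
  · rw [norm_smul, norm_inv, norm_norm, inv_mul_cancel₀ hpos.ne']
  · rw [real_inner_smul_left, hex]
    positivity

theorem AffineSubspace.inner_sub_eq_of_mem {F : AffineSubspace ℝ E} (hF : F.direction = (ℝ ∙ u)ᗮ)
    {q q' : E} (hq : q ∈ F) (hq' : q' ∈ F) (x : E) : ⟪u, x - q⟫ = ⟪u, x - q'⟫ := by
  have : ⟪u, q - q'⟫ = 0 :=
    Submodule.mem_orthogonal_singleton_iff_inner_right.mp (hF ▸ F.vsub_mem_direction hq hq')
  rw [← sub_sub_sub_cancel_right x q q', inner_sub_right, this, sub_zero]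

theorem inner_sub_mem_Ioo_of_mem_interior_convexHull {ι : Type*} {p : ι → E} {i : ι}
    (hu : u ≠ 0) {h : ℝ} (hh : 0 ≤ h) (hp : ∀ j ≠ i, ⟪u, p i - p j⟫ = h) {x : E}
    (hx : x ∈ interior (convexHull ℝ (Set.range p))) :
    0 < ⟪u, p i - x⟫ ∧ ⟪u, p i - x⟫ < h := by
  have hf : innerSL ℝ u ≠ 0 := fun hf => hu (by simpa using congrArg (· u) hf)
  have hvert (j : ι) : ⟪u, p i⟫ - h ≤ ⟪u, p j⟫ ∧ ⟪u, p j⟫ ≤ ⟪u, p i⟫ := by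
    rcases eq_or_ne j i with rfl | hj
    · exact ⟨by linarith, le_rfl⟩
    · have hpj := hp j hj
      rw [inner_sub_right] at hpj
      constructor <;> linarith
  rw [inner_sub_right, sub_pos, sub_lt_comm]
  constructor
  · refine (innerSL ℝ u).apply_lt_of_mem_interior_convexHull hf ?_ hx
    rintro _ ⟨j, rfl⟩
    exact (hvert j).2
  · have hlt := (-innerSL ℝ u).apply_lt_of_mem_interior_convexHull (c := h - ⟪u, p i⟫)
      (neg_ne_zero.mpr hf) ?_ hx
    · rw [neg_apply, innerSL_apply_apply] at hlt
      linarith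
    rintro _ ⟨j, rfl⟩
    rw [neg_apply, innerSL_apply_apply]
    linarith [(hvert j).1]

end InnerProductSpace

theorem infinite_setOf_mem_abs_le_of_mul_mem {Λ : Set ℝ} {c s : ℝ} (hc : c ∈ Λ) (hc0 : c ≠ 0)
    (hs0 : 0 < s) (hs1 : s < 1) (hΛ : ∀ x ∈ Λ, s * x ∈ Λ) :
    {x | x ∈ Λ ∧ |x| ≤ |c|}.Infinite := by
  have hmem (k : ℕ) : s ^ k * c ∈ Λ := by
    induction k with
    | zero => simpa using hc
    | succ k ih => simpa only [pow_succ', mul_assoc] using hΛ _ ih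
  refine Set.infinite_of_injective_forall_mem (f := fun k : ℕ => s ^ k * c) ?_
    fun k => ⟨hmem k, ?_⟩
  · exact fun k l hkl => (pow_right_strictAnti₀ hs0 hs1).injective (mul_right_cancel₀ hc0 hkl)
  · rw [abs_mul, abs_of_pos (pow_pos hs0 k)]
    exact mul_le_of_le_one_left (abs_nonneg c) (pow_le_one₀ hs0.le hs1.le)

section Simplex

variable {n : ℕ}

theorem ProperlyDiscont.finite_setOf_addLeft_smul_mem {G : Subgroup (Euc n ≃ᵢ Euc n)}
    (hG : ProperlyDiscont G) {u : Euc n} (hu : u ≠ 0) (R : ℝ) :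
    {c : ℝ | IsometryEquiv.addLeft (c • u) ∈ G ∧ |c| ≤ R}.Finite := by
  have hfin := hG {0} (Metric.closedBall 0 (R * ‖u‖)) isCompact_singleton
    (isCompact_closedBall _ _)
  refine (hfin.preimage (f := fun c : ℝ => IsometryEquiv.addLeft (c • u)) ?_).subset ?_
  · intro a _ b _ hab
    have hab0 := congrArg (· 0) hab
    simp only [IsometryEquiv.addLeft_apply, add_zero] at hab0
    exact smul_left_injective ℝ hu hab0
  · rintro c ⟨hcG, hcR⟩
    refine ⟨hcG, c • u, ⟨0, rfl, add_zero _⟩, ?_⟩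
    rw [mem_closedBall_zero_iff, norm_smul, Real.norm_eq_abs]
    exact mul_le_mul_of_nonneg_right hcR (norm_nonneg u)

theorem IsReflectionIn.apply_eq {g : Euc n ≃ᵢ Euc n} {H : AffineSubspace ℝ (Euc n)}
    {u z : Euc n} (hg : IsReflectionIn g H) (hu : ‖u‖ = 1) (hH : H.direction = (ℝ ∙ u)ᗮ)
    (hz : z ∈ H) (y : Euc n) : g y = y - (2 * ⟪u, y - z⟫) • u := by
  obtain ⟨hfix, hne⟩ := hg
  have hg (x : Euc n) : g x = g.toRealLinearIsometryEquiv (x - z) + z := by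
    rw [g.toRealLinearIsometryEquiv_sub, hfix z hz, sub_add_cancel]
  have hlin : ∀ w ∈ (ℝ ∙ u)ᗮ, g.toRealLinearIsometryEquiv w = w := fun w hw => by
    have hwz : w + z ∈ H := AffineSubspace.vadd_mem_of_mem_direction (hH ▸ hw) hz
    rw [← add_right_cancel_iff (a := z), ← add_sub_cancel_right w z, ← hg, hfix _ hwz,
      sub_add_cancel]
  rcases g.toRealLinearIsometryEquiv.eq_id_or_eq_reflection hu hlin with hid | hrefl
  · exact absurd (IsometryEquiv.ext fun x => by rw [hg, hid, sub_add_cancel]; rfl) hne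
  · rw [hg, hrefl]
    abel

theorem isReflectionIn_reflection {H : AffineSubspace ℝ (Euc n)} [Nonempty H] {x : Euc n}
    (hx : x ∉ H) : IsReflectionIn (EuclideanGeometry.reflection H).toIsometryEquiv H :=
  ⟨fun y hy => (EuclideanGeometry.reflection_eq_self_iff y).mpr hy, fun h =>
    hx ((EuclideanGeometry.reflection_eq_self_iff x).mp (congrArg (· x) h))⟩

theorem mem_facetHyperplane (p : Fin (n + 1) → Euc n) {i j : Fin (n + 1)} (hji : j ≠ i) :
    p j ∈ facetHyperplane p i :=
  mem_affineSpan ℝ (Set.mem_image_of_mem p hji)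

theorem notMem_facetHyperplane {p : Fin (n + 1) → Euc n} (hp : AffineIndependent ℝ p)
    (i : Fin (n + 1)) : p i ∉ facetHyperplane p i :=
  (hp.mem_affineSpan_iff i _).not.mpr fun hii => hii rfl

theorem finrank_direction_facetHyperplane {p : Fin (n + 1) → Euc n}
    (hp : AffineIndependent ℝ p) (hn : 1 ≤ n) (i : Fin (n + 1)) :
    Module.finrank ℝ (facetHyperplane p i).direction = n - 1 := by
  rw [facetHyperplane, direction_affineSpan, Set.image_eq_range]
  refine (hp.subtype _).finrank_vectorSpan ?_
  simp [Finset.filter_ne']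
  omega

theorem exists_unit_normal_facetHyperplane {p : Fin (n + 1) → Euc n}
    (hp : AffineIndependent ℝ p) {i j : Fin (n + 1)} (hji : j ≠ i) :
    ∃ u : Euc n, ‖u‖ = 1 ∧ (facetHyperplane p i).direction = (ℝ ∙ u)ᗮ ∧
      0 < ⟪u, p i - p j⟫ := by
  have hn : n ≠ 0 := by
    rintro rfl
    exact hji (Fin.ext (by omega))
  refine Submodule.exists_unit_normal_of_finrank_orthogonal_eq_one ?_ ?_
  · have := (facetHyperplane p i).direction.finrank_add_finrank_orthogonal
    rw [finrank_direction_facetHyperplane hp (by omega), finrank_euclideanSpace_fin] at this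
    omega
  · rw [← vsub_eq_sub, AffineSubspace.vsub_right_mem_direction_iff_mem
      (mem_facetHyperplane p hji)]
    exact notMem_facetHyperplane hp i

theorem exists_isReflectionIn_facetHyperplane {p : Fin (n + 1) → Euc n}
    (hp : AffineIndependent ℝ p) {i j : Fin (n + 1)} (hji : j ≠ i) :
    ∃ σ ∈ reflGroup p, IsReflectionIn σ (facetHyperplane p i) := by
  have : Nonempty (facetHyperplane p i) := ⟨⟨p j, mem_facetHyperplane p hji⟩⟩
  have hσ := isReflectionIn_reflection (notMem_facetHyperplane hp i)
  exact ⟨_, Subgroup.subset_closure ⟨i, hσ⟩, hσ⟩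

theorem addLeft_smul_vertex_displacement_mem_reflGroup {p : Fin (n + 1) → Euc n}
    {i : Fin (n + 1)} {u q : Euc n} (hu : ‖u‖ = 1)
    (hF : (facetHyperplane p i).direction = (ℝ ∙ u)ᗮ) (hq : q ∈ facetHyperplane p i)
    (hh : ⟪u, p i - q⟫ ≠ 0) {c : ℝ} (hc : IsometryEquiv.addLeft (c • u) ∈ reflGroup p)
    {g : Euc n ≃ᵢ Euc n} (hg : g ∈ reflGroup p) :
    IsometryEquiv.addLeft ((c / (2 * ⟪u, p i - q⟫)) • (g (p i) - p i)) ∈ reflGroup p := by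
  refine IsometryEquiv.addLeft_smul_sub_mem_closure (p i) _ ?_ hg
  rintro s ⟨k, hs⟩
  rcases eq_or_ne k i with rfl | hk
  · rw [IsReflectionIn.apply_eq hs hu hF hq, sub_sub_cancel_left, smul_neg, smul_smul,
      div_mul_cancel₀ _ (mul_ne_zero two_ne_zero hh), IsometryEquiv.addLeft_neg]
    exact inv_mem hc
  · rw [hs.1 _ (mem_facetHyperplane p hk.symm), sub_self, smul_zero,
      IsometryEquiv.addLeft_zero]
    exact one_mem _

theorem addLeft_smul_mem_reflGroup_of_parallel_mirror {p : Fin (n + 1) → Euc n}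
    {i : Fin (n + 1)} {u q x₀ : Euc n} (hu : ‖u‖ = 1)
    (hF : (facetHyperplane p i).direction = (ℝ ∙ u)ᗮ) (hq : q ∈ facetHyperplane p i)
    (hh : ⟪u, p i - q⟫ ≠ 0) {ρ : Euc n ≃ᵢ Euc n} (hρG : ρ ∈ reflGroup p)
    (hρ : ∀ y, ρ y = y - (2 * ⟪u, y - x₀⟫) • u) {c : ℝ}
    (hc : IsometryEquiv.addLeft (c • u) ∈ reflGroup p) :
    IsometryEquiv.addLeft ((⟪u, p i - x₀⟫ / ⟪u, p i - q⟫ * c) • u) ∈ reflGroup p := by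
  have hρc := addLeft_smul_vertex_displacement_mem_reflGroup hu hF hq hh hc hρG
  have hcoef : c / (2 * ⟪u, p i - q⟫) * (2 * ⟪u, p i - x₀⟫) = ⟪u, p i - x₀⟫ / ⟪u, p i - q⟫ * c := by
    field_simp
  rwa [hρ, sub_sub_cancel_left, smul_neg, smul_smul, hcoef, IsometryEquiv.addLeft_neg,
    inv_mem_iff] at hρc

end Simplex

/-- If the reflection group of a Euclidean `n`-simplex is discrete, then no
mirror of the group which decomposes the simplex (i.e. meets its interior) is parallel to
a facet of the simplex. -/
theorem no_mirror_parallel_to_facet {n : ℕ} (hn : 1 ≤ n) (p : Fin (n + 1) → Euc n)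
    (hp : AffineIndependent ℝ p) (hdisc : ProperlyDiscont (reflGroup p)) :
    ¬ ∃ H : AffineSubspace ℝ (Euc n),
        (∃ g ∈ reflGroup p, IsReflectionIn g H) ∧
        (∃ i : Fin (n + 1), H.direction = (facetHyperplane p i).direction) ∧
        ((H : Set (Euc n)) ∩ interior (convexHull ℝ (Set.range p))).Nonempty := by
  rintro ⟨H, ⟨ρ, hρG, hρ⟩, ⟨i, hHF⟩, x₀, hx₀H, hx₀⟩
  have : Nontrivial (Fin (n + 1)) := Fin.nontrivial_iff_two_le.mpr (by omega)
  obtain ⟨j, hji⟩ := exists_ne i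
  have hq := mem_facetHyperplane p hji
  obtain ⟨u, hu, hF, hh⟩ := exists_unit_normal_facetHyperplane hp hji
  have hu0 : u ≠ 0 := norm_ne_zero_iff.mp (hu ▸ one_ne_zero)
  obtain ⟨ha, hah⟩ := inner_sub_mem_Ioo_of_mem_interior_convexHull hu0 hh.le
    (fun k hk => AffineSubspace.inner_sub_eq_of_mem hF (mem_facetHyperplane p hk) hq _) hx₀
  have hρ' := IsReflectionIn.apply_eq hρ hu (hHF.trans hF) hx₀H
  obtain ⟨σ, hσG, hσ⟩ := exists_isReflectionIn_facetHyperplane hp hji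
  have htr : IsometryEquiv.addLeft ((2 * ⟪u, p j - x₀⟫) • u) ∈ reflGroup p := by
    rw [← IsometryEquiv.mul_eq_addLeft_of_parallel_mirrors hu (hσ.apply_eq hu hF hq) hρ']
    exact mul_mem hσG hρG
  have htr0 : 2 * ⟪u, p j - x₀⟫ ≠ 0 := by
    rw [← sub_sub_sub_cancel_left x₀ (p j) (p i), inner_sub_right]
    linarith
  exact infinite_setOf_mem_abs_le_of_mul_mem
    (Λ := {c | IsometryEquiv.addLeft (c • u) ∈ reflGroup p}) htr htr0 (div_pos ha hh)
    ((div_lt_one hh).mpr hah)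
    (fun c => addLeft_smul_mem_reflGroup_of_parallel_mirror hu hF hq hh.ne' hρG hρ')
    (hdisc.finite_setOf_addLeft_smul_mem hu0 _)
end
end

section
/- Let n ≥ 2 and let f_0,…,f_n be vectors in ℝ^{n+1}, each belonging to the root system A_n = {e_i − e_j : 0 ≤ i ≠ j ≤ n}. Suppose that any n of the vectors f_0,…,f_n are linearly independent, while all n+1 of them are linearly dependent. Then there exists a permutation σ of {0,1,…,n} such that, as sets, {f_0, −f_0, f_1, −f_1, …, f_n, −f_n} = {±(e_{σ(m)} − e_{σ(m+1 mod n+1)}) : m = 0,…,n}. That is, the configuration is exactly that of the Coxeter simplex of type Ã_n, whose graph is a cycle on n+1 nodes. -/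
/-!
Take a relation `∑ c k • f k = 0`. Since any `n` of the `f k` are independent, a relation
vanishing at one index vanishes identically, so every `c k` is nonzero. Orienting each root as
`f k = ±(e (a k) - e (b k))` with `c k • f k = |c k| • (e (a k) - e (b k))` turns the relation
into a positive circulation on the directed graph with edges `b k → a k`, so a vertex is a head
iff it is a tail. A vertex missed by every edge would put `n` independent roots into a space of
dimension `n - 1`; hence `a` and `b` are bijections and `τ = a ∘ b⁻¹` is a fixed-point-free
permutation. Summing `e (τ v) - e v` over a cycle of `τ` gives a relation, which would vanish at
some index if the cycle were proper; so `τ` is a single `(n + 1)`-cycle, i.e. conjugate to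
`m ↦ m + 1`.
-/

noncomputable section

/-- The standard basis vector `e i` of `ℝ^{n+1}`. -/
def stdBasis (n : ℕ) (i : Fin (n + 1)) : EuclideanSpace ℝ (Fin (n + 1)) :=
  EuclideanSpace.single i 1

open Finset Equiv

section Circuit

variable {R M ι : Type*} [Ring R] [AddCommGroup M] [Module R M] [Fintype ι]

theorem eq_zero_of_sum_smul_eq_zero_of_apply_eq_zero {v : ι → M}
    (hv : ∀ k : ι, LinearIndependent R fun m : {m // m ≠ k} => v (m : ι)) {c : ι → R}
    (hc : ∑ k, c k • v k = 0) {k₀ : ι} (hk₀ : c k₀ = 0) : c = 0 := by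
  classical
  funext k
  by_cases hk : k = k₀
  · rw [hk, hk₀, Pi.zero_apply]
  refine Fintype.linearIndependent_iff.1 (hv k₀) (fun m => c m) ?_ ⟨k, hk⟩
  rw [← Finset.sum_subtype (univ.erase k₀) (by simp) (fun m => c m • v m),
    Finset.sum_erase _ (by simp [hk₀]), hc]

theorem exists_sum_smul_eq_zero_forall_ne_zero {v : ι → M}
    (hv : ∀ k : ι, LinearIndependent R fun m : {m // m ≠ k} => v (m : ι))
    (hdep : ¬LinearIndependent R v) :
    ∃ c : ι → R, ∑ k, c k • v k = 0 ∧ ∀ k, c k ≠ 0 := by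
  obtain ⟨c, hc, k, hck⟩ := Fintype.not_linearIndependent_iff.1 hdep
  exact ⟨c, hc, fun k' hk' =>
    hck (congrFun (eq_zero_of_sum_smul_eq_zero_of_apply_eq_zero hv hc hk') k)⟩

omit [Fintype ι] in
theorem LinearIndependent.of_forall_eq_or_eq_neg {u w : ι → M} (hu : LinearIndependent R u)
    (h : ∀ k, w k = u k ∨ w k = -u k) : LinearIndependent R w := by
  choose s hs using fun k => show ∃ s : Rˣ, w k = s • u k from
    (h k).elim (fun h => ⟨1, by rw [h, one_smul]⟩)
      (fun h => ⟨-1, by rw [h, Units.neg_smul, one_smul]⟩)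
  convert hu.units_smul s
  funext k
  exact hs k

end Circuit

def signedRange {ι M : Type*} [Neg M] (u : ι → M) : Set M := {x | ∃ k, x = u k ∨ x = -u k}

theorem signedRange_eq_of_equiv {ι κ M : Type*} [InvolutiveNeg M] {u : ι → M} {w : κ → M}
    (e : ι ≃ κ)
    (h : ∀ k, u k = w (e k) ∨ u k = -w (e k)) : signedRange u = signedRange w := by
  have key (k : ι) (x : M) : (x = u k ∨ x = -u k) ↔ (x = w (e k) ∨ x = -w (e k)) := by
    rcases h k with hk | hk <;> simp [hk, or_comm]
  ext x
  simp only [signedRange, Set.mem_ofPred_eq, key]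
  exact (e.surjective.exists (p := fun m => x = w m ∨ x = -w m)).symm

theorem exists_sub_eq_or_eq_neg_and_smul_eq_abs_smul {V M : Type*} [AddCommGroup M] [Module ℝ M]
    (u : V → M) {i j : V} (hij : i ≠ j) (t : ℝ) :
    ∃ i' j', i' ≠ j' ∧ (u i - u j = u i' - u j' ∨ u i - u j = -(u i' - u j')) ∧
      t • (u i - u j) = |t| • (u i' - u j') := by
  rcases abs_choice t with h | h
  · exact ⟨i, j, hij, Or.inl rfl, by rw [h]⟩
  · exact ⟨j, i, hij.symm, Or.inr (neg_sub _ _).symm, by rw [h, neg_smul, ← smul_neg, neg_sub]⟩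

section Roots

variable {n : ℕ}

theorem range_eq_range_of_sum_smul_stdBasis_sub_eq_zero {ι : Type*} [Fintype ι]
    {a b : ι → Fin (n + 1)} {w : ι → ℝ} (hw : ∀ k, 0 < w k)
    (h : ∑ k, w k • (stdBasis n (a k) - stdBasis n (b k)) = 0) : Set.range a = Set.range b := by
  classical
  have hcoord (i : Fin (n + 1)) :
      ∑ k ∈ univ.filter (a · = i), w k = ∑ k ∈ univ.filter (b · = i), w k := by
    have := congrArg (· i) h
    simp only [WithLp.ofLp_sum, Finset.sum_apply, stdBasis, PiLp.smul_apply, PiLp.sub_apply,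
      PiLp.single_apply, smul_eq_mul, PiLp.zero_apply, mul_sub, mul_ite, mul_one, mul_zero,
      sum_sub_distrib, sub_eq_zero] at this
    simpa [sum_filter, eq_comm] using this
  have hpos (u : ι → Fin (n + 1)) (i : Fin (n + 1)) :
      0 < ∑ k ∈ univ.filter (u · = i), w k ↔ i ∈ Set.range u := by
    rw [sum_pos_iff_of_nonneg (fun k _ => (hw k).le)]
    simp [hw]
  ext i
  rw [← hpos, ← hpos, hcoord]

theorem card_lt_of_linearIndependent_of_ne {κ : Type*} [Fintype κ] (hn : n ≠ 0)
    {a b : κ → Fin (n + 1)}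
    (hli : LinearIndependent ℝ fun k => stdBasis n (a k) - stdBasis n (b k))
    {i : Fin (n + 1)} (ha : ∀ k, a k ≠ i) (hb : ∀ k, b k ≠ i) : Fintype.card κ < n := by
  classical
  have : Nontrivial (Fin (n + 1)) := Fin.nontrivial_iff_two_le.2 (by omega)
  obtain ⟨j₀, hj₀⟩ := exists_ne i
  set T := ({i, j₀}ᶜ : Finset (Fin (n + 1))).image fun j => stdBasis n j - stdBasis n j₀
  have hmem (j : Fin (n + 1)) (hj : j ≠ i) :
      stdBasis n j - stdBasis n j₀ ∈
        Submodule.span ℝ (T : Set (EuclideanSpace ℝ (Fin (n + 1)))) := by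
    by_cases hjj : j = j₀
    · simp [hjj]
    · exact Submodule.subset_span (mem_coe.2 (mem_image_of_mem _ (by simp [hj, hjj])))
  have hspan : Set.range (fun k => stdBasis n (a k) - stdBasis n (b k)) ⊆
      Submodule.span ℝ (T : Set (EuclideanSpace ℝ (Fin (n + 1)))) := by
    refine Set.range_subset_iff.2 fun k => ?_
    rw [SetLike.mem_coe, ← sub_sub_sub_cancel_right _ _ (stdBasis n j₀)]
    exact sub_mem (hmem _ (ha k)) (hmem _ (hb k))
  have hT : T.card ≤ n - 1 := by
    refine card_image_le.trans ?_
    rw [card_compl, card_pair hj₀.symm, Fintype.card_fin]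
    omega
  have := linearIndependent_le_span_aux' _ hli _ hspan
  simp only [Finset.coe_sort_coe, Fintype.card_coe] at this
  omega

end Roots

theorem Equiv.Perm.sum_filter_sameCycle_sub_eq_zero {V M : Type*} [Fintype V] [DecidableEq V]
    [AddCommGroup M] (τ : Perm V) (e : V → M) (x : V) :
    ∑ v ∈ univ.filter (τ.SameCycle x), (e (τ v) - e v) = 0 := by
  rw [sum_sub_distrib, sub_eq_zero]
  exact Finset.sum_equiv τ (by simp [Perm.sameCycle_apply_right]) (fun _ _ => rfl)

theorem Equiv.Perm.sameCycle_of_linearIndependent {R V ι M : Type*} [Ring R] [Nontrivial R]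
    [Fintype V] [DecidableEq V] [Fintype ι] [AddCommGroup M] [Module R M] {τ : Perm V}
    (e : V → M) (b : ι ≃ V)
    (hind : ∀ k : ι, LinearIndependent R fun m : {m // m ≠ k} => e (τ (b m)) - e (b m))
    (x y : V) : τ.SameCycle x y := by
  classical
  by_contra hxy
  let c : ι → R := fun k => if τ.SameCycle x (b k) then 1 else 0
  have hc : ∑ k, c k • (e (τ (b k)) - e (b k)) = 0 := by
    rw [← τ.sum_filter_sameCycle_sub_eq_zero e x, sum_filter]
    exact Fintype.sum_equiv b _ _ (fun k => by simp [c, ite_smul])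
  have := congrFun (eq_zero_of_sum_smul_eq_zero_of_apply_eq_zero hind hc
    (k₀ := b.symm y) (by simp [c, hxy])) (b.symm x)
  simp [c, Perm.SameCycle.refl] at this

theorem Equiv.Perm.exists_conj_finRotate {n : ℕ} {τ : Perm (Fin (n + 1))} (hfix : ∀ v, τ v ≠ v)
    (hcyc : ∀ x y, τ.SameCycle x y) : ∃ σ : Perm (Fin (n + 1)), ∀ m, σ (m + 1) = τ (σ m) := by
  obtain _ | n := n
  · exact (hfix 0 (Subsingleton.elim (α := Fin 1) _ _)).elim
  have hτ : τ.IsCycle := ⟨0, hfix 0, fun y _ => hcyc 0 y⟩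
  have hsupp : τ.support = univ := eq_univ_of_forall fun v => Perm.mem_support.2 (hfix v)
  obtain ⟨σ, hσ⟩ := isConj_iff.1 (isCycle_finRotate.isConj hτ (by rw [support_finRotate, hsupp]))
  refine ⟨σ, fun m => ?_⟩
  rw [← hσ]
  simp [finRotate_apply]

theorem exists_perm_of_sum_smul_stdBasis_sub_eq_zero {n : ℕ} {a b : Fin (n + 1) → Fin (n + 1)}
    (hab : ∀ k, a k ≠ b k) {w : Fin (n + 1) → ℝ} (hw : ∀ k, 0 < w k)
    (hrel : ∑ k, w k • (stdBasis n (a k) - stdBasis n (b k)) = 0)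
    (hind : ∀ k : Fin (n + 1), LinearIndependent ℝ fun m : {m // m ≠ k} =>
      stdBasis n (a m) - stdBasis n (b m)) :
    ∃ (σ : Perm (Fin (n + 1))) (e : Fin (n + 1) ≃ Fin (n + 1)), ∀ k,
      stdBasis n (a k) - stdBasis n (b k) = -(stdBasis n (σ (e k)) - stdBasis n (σ (e k + 1))) := by
  have hn : n ≠ 0 := by
    rintro rfl
    exact hab 0 (Subsingleton.elim (α := Fin 1) _ _)
  have hrange := range_eq_range_of_sum_smul_stdBasis_sub_eq_zero hw hrel
  have ha : Function.Surjective a := by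
    intro i
    by_contra hi
    have hib : i ∉ Set.range b := hrange ▸ hi
    have := card_lt_of_linearIndependent_of_ne hn (hind 0) (fun k hk => hi ⟨k, hk⟩)
      (fun k hk => hib ⟨k, hk⟩)
    simp at this
  have hb : Function.Surjective b := Set.range_eq_univ.1 (hrange ▸ Set.range_eq_univ.2 ha)
  let eb := Equiv.ofBijective b hb.bijective_of_finite
  let τ := eb.symm.trans (Equiv.ofBijective a ha.bijective_of_finite)
  have hτ (k : Fin (n + 1)) : τ (b k) = a k := by
    simp [τ, eb]
  have hcyc := Perm.sameCycle_of_linearIndependent (τ := τ) (stdBasis n) eb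
    (by simpa only [eb, Equiv.ofBijective_apply, hτ] using hind)
  have hfix (v : Fin (n + 1)) : τ v ≠ v := by
    simpa [τ, eb, Equiv.ofBijective_apply_symm_apply] using hab (eb.symm v)
  obtain ⟨σ, hσ⟩ := Perm.exists_conj_finRotate hfix hcyc
  refine ⟨σ, eb.trans σ.symm, fun k => ?_⟩
  simp [eb, hσ, hτ]

theorem family_An_general {n : ℕ} (f : Fin (n + 1) → EuclideanSpace ℝ (Fin (n + 1)))
    (hroot : ∀ k, ∃ i j : Fin (n + 1), i ≠ j ∧ f k = stdBasis n i - stdBasis n j)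
    (hind : ∀ k : Fin (n + 1),
      LinearIndependent ℝ (fun m : {m : Fin (n + 1) // m ≠ k} => f (m : Fin (n + 1))))
    (hdep : ¬ LinearIndependent ℝ f) :
    ∃ σ : Equiv.Perm (Fin (n + 1)),
      {v : EuclideanSpace ℝ (Fin (n + 1)) | ∃ k, v = f k ∨ v = -f k} =
        {v : EuclideanSpace ℝ (Fin (n + 1)) | ∃ m : Fin (n + 1),
          v = stdBasis n (σ m) - stdBasis n (σ (m + 1)) ∨
          v = -(stdBasis n (σ m) - stdBasis n (σ (m + 1)))} := by
  obtain ⟨c, hc, hc0⟩ := exists_sum_smul_eq_zero_forall_ne_zero hind hdep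
  have horient (k : Fin (n + 1)) : ∃ i j, i ≠ j ∧
      (f k = stdBasis n i - stdBasis n j ∨ f k = -(stdBasis n i - stdBasis n j)) ∧
      c k • f k = |c k| • (stdBasis n i - stdBasis n j) := by
    obtain ⟨i, j, hij, hk⟩ := hroot k
    rw [hk]
    exact exists_sub_eq_or_eq_neg_and_smul_eq_abs_smul (stdBasis n) hij (c k)
  choose a b hab hsign hscale using horient
  obtain ⟨σ, e, hσ⟩ := exists_perm_of_sum_smul_stdBasis_sub_eq_zero hab
    (fun k => abs_pos.2 (hc0 k)) (by simpa only [← hscale] using hc)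
    (fun k => (hind k).of_forall_eq_or_eq_neg fun m =>
      (hsign m).imp Eq.symm fun h => by rw [h, neg_neg])
  refine ⟨σ, signedRange_eq_of_equiv e fun k => ?_⟩
  rcases hsign k with h | h
  · exact Or.inr (h.trans (hσ k))
  · exact Or.inl (by rw [h, hσ k, neg_neg])

/-- If `f 0, …, f n` are roots of the root system `Aₙ = {eᵢ - eⱼ : i ≠ j}` in
`ℝ^{n+1}` such that any `n` of them are linearly independent while all `n + 1` of them are
linearly dependent, then up to signs and a permutation `σ` they form the cyclic configuration
`±(e_{σ(m)} - e_{σ(m+1 mod n+1)})`, i.e. the configuration of the Coxeter simplex `Ãₙ`. -/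
theorem family_An {n : ℕ} (hn : 2 ≤ n) (f : Fin (n + 1) → EuclideanSpace ℝ (Fin (n + 1)))
    (hroot : ∀ k, ∃ i j : Fin (n + 1), i ≠ j ∧ f k = stdBasis n i - stdBasis n j)
    (hind : ∀ k : Fin (n + 1),
      LinearIndependent ℝ (fun m : {m : Fin (n + 1) // m ≠ k} => f (m : Fin (n + 1))))
    (hdep : ¬ LinearIndependent ℝ f) :
    ∃ σ : Equiv.Perm (Fin (n + 1)),
      {v : EuclideanSpace ℝ (Fin (n + 1)) | ∃ k, v = f k ∨ v = -f k} =
        {v : EuclideanSpace ℝ (Fin (n + 1)) | ∃ m : Fin (n + 1),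
          v = stdBasis n (σ m) - stdBasis n (σ (m + 1)) ∨
          v = -(stdBasis n (σ m) - stdBasis n (σ (m + 1)))} :=
  family_An_general f hroot hind hdep
end
end

section
/- Let n ≥ 2 and let f_0,…,f_n be n+1 vectors in ℝ^n, each belonging to the root system B_n = {±e_i : 1 ≤ i ≤ n} ∪ {±e_i ± e_j : 1 ≤ i < j ≤ n}, such that any n of the vectors f_0,…,f_n are linearly independent. Suppose at least two of the vectors f_k belong to {±e_1,…,±e_n}. Then there exist a permutation σ of {1,…,n} and signs ε_1,…,ε_n ∈ {+1,−1} such that, setting b_i = ε_i e_{σ(i)}, one has the equality of sets {±f_0, ±f_1, …, ±f_n} = {±b_1} ∪ {±(b_i − b_{i+1}) : 1 ≤ i ≤ n−1} ∪ {±b_n}; that is, the configuration is exactly that of the Coxeter simplex C̃_n. -/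
/-!
A proper subfamily of the `f k` is linearly independent, so if it is supported on `r`
coordinates it has at most `r` members. If at most one `f k` were nonzero at a coordinate `i`,
the other `n` vectors would be supported on `n - 1` coordinates; so every coordinate is nonzero
in at least two of the `f k`. A root has at most two nonzero coordinates and a short root only
one, so double counting shows that every coordinate is nonzero in exactly two of the `f k`.

Starting from a short root `± e a`, alternately pass to the other vector that is nonzero at the
current coordinate, and then to the other nonzero coordinate of that vector. This traces a chain
`f (g 0), f (g 1), …` supported on `{v 0}, {v 0, v 1}, {v 1, v 2}, …`. The chain cannot stop
early at a short root, since `m + 2` of the vectors would then be supported on `m + 1`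
coordinates. So it runs through all `n` coordinates and ends with the one remaining vector,
which is `± e (v (n - 1))`. Choosing the signs of `b p = ± e (v p)` along the chain gives the
pattern of `C̃ₙ`.
-/

noncomputable section

/-- The standard basis vector `e i` of `ℝⁿ`. -/
def stdE (n : ℕ) (i : Fin n) : EuclideanSpace ℝ (Fin n) :=
  EuclideanSpace.single i 1

/-- Membership in the short roots `{± e i}` of the root system `Bₙ`. -/
def IsShortRootB (n : ℕ) (v : EuclideanSpace ℝ (Fin n)) : Prop :=
  ∃ i : Fin n, v = stdE n i ∨ v = -stdE n i

/-- Membership in the long roots `{± e i ± e j, i ≠ j}` (the root system `Dₙ`). -/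
def IsLongRootB (n : ℕ) (v : EuclideanSpace ℝ (Fin n)) : Prop :=
  ∃ i j : Fin n, i ≠ j ∧ ∃ s t : ℝ, (s = 1 ∨ s = -1) ∧ (t = 1 ∨ t = -1) ∧
    v = s • stdE n i + t • stdE n j

/-- Membership in the root system `Bₙ = {± e i} ∪ {± e i ± e j, i < j}`. -/
def IsRootB (n : ℕ) (v : EuclideanSpace ℝ (Fin n)) : Prop :=
  IsShortRootB n v ∨ IsLongRootB n v

open Finset

section CoordSupport

variable {κ : Type*} [Fintype κ]

def coordSupport (x : EuclideanSpace ℝ κ) : Finset κ := {i | x i ≠ 0}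

lemma mem_coordSupport {x : EuclideanSpace ℝ κ} {i : κ} : i ∈ coordSupport x ↔ x i ≠ 0 := by
  simp [coordSupport]

variable [DecidableEq κ]

lemma eq_sum_coordSupport (x : EuclideanSpace ℝ κ) :
    x = ∑ i ∈ coordSupport x, x i • EuclideanSpace.single i (1 : ℝ) := by
  ext j
  by_cases hj : x j = 0 <;> simp [Pi.single_apply, mem_coordSupport, hj]

lemma card_le_card_of_coordSupport_subset {ι : Type*} {f : ι → EuclideanSpace ℝ κ}
    {s : Finset ι} (hs : LinearIndependent ℝ fun k : s => f k) {V : Finset κ}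
    (hV : ∀ k ∈ s, coordSupport (f k) ⊆ V) : #s ≤ #V := by
  set E : Finset (EuclideanSpace ℝ κ) := V.image fun i => EuclideanSpace.single i (1 : ℝ)
  have hspan : Submodule.span ℝ (Set.range fun k : s => f k) ≤ Submodule.span ℝ (E : Set _) := by
    rw [Submodule.span_le]
    rintro _ ⟨k, rfl⟩
    dsimp only
    rw [SetLike.mem_coe, eq_sum_coordSupport (f k)]
    refine Submodule.sum_mem _ fun i hi => Submodule.smul_mem _ _ (Submodule.subset_span ?_)
    exact mem_coe.2 (mem_image_of_mem _ (hV k k.2 hi))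
  have := Submodule.finrank_mono hspan
  rw [finrank_span_eq_card hs, Fintype.card_coe] at this
  exact this.trans ((finrank_span_finset_le_card E).trans card_image_le)

end CoordSupport

section Roots

variable {n : ℕ}

lemma IsShortRootB.exists_coordSupport_eq {x : EuclideanSpace ℝ (Fin n)} (h : IsShortRootB n x) :
    ∃ a, coordSupport x = {a} := by
  obtain ⟨a, rfl | rfl⟩ := h <;>
  · refine ⟨a, Finset.ext fun l => ?_⟩
    by_cases hl : l = a <;> simp [mem_coordSupport, stdE, hl]

lemma IsLongRootB.coordSupport_subset {x : EuclideanSpace ℝ (Fin n)} (h : IsLongRootB n x) :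
    ∃ i j, coordSupport x ⊆ {i, j} := by
  obtain ⟨i, j, -, s, t, -, -, rfl⟩ := h
  refine ⟨i, j, fun l hl => ?_⟩
  by_contra hij
  simp only [mem_insert, mem_singleton, not_or] at hij
  simp [mem_coordSupport, stdE, hij.1, hij.2] at hl

lemma IsRootB.card_coordSupport_le {x : EuclideanSpace ℝ (Fin n)} (h : IsRootB n x) :
    #(coordSupport x) ≤ 2 := by
  rcases h with h | h
  · obtain ⟨a, ha⟩ := h.exists_coordSupport_eq
    simp [ha]
  · obtain ⟨i, j, hij⟩ := h.coordSupport_subset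
    exact (card_le_card hij).trans card_le_two

lemma IsRootB.apply_eq_one_or_eq_neg_one {x : EuclideanSpace ℝ (Fin n)} (h : IsRootB n x)
    {l : Fin n} (hl : l ∈ coordSupport x) : x l = 1 ∨ x l = -1 := by
  rw [mem_coordSupport] at hl
  rcases h with ⟨a, rfl | rfl⟩ | ⟨i, j, hij, s, t, hs, ht, rfl⟩
  · by_cases hla : l = a <;> simp_all [stdE]
  · by_cases hla : l = a <;> simp_all [stdE]
  · by_cases hli : l = i <;> by_cases hlj : l = j <;> simp_all [stdE]

end Roots

section ProperSubfamilies

variable {ι κ : Type*} [Fintype ι] [Fintype κ] {f : ι → EuclideanSpace ℝ κ}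

def nonzeroAt (f : ι → EuclideanSpace ℝ κ) (i : κ) : Finset ι := {k | f k i ≠ 0}

lemma mem_nonzeroAt {i : κ} {k : ι} : k ∈ nonzeroAt f i ↔ i ∈ coordSupport (f k) := by
  simp [nonzeroAt, mem_coordSupport]

lemma sum_card_nonzeroAt : ∑ i, #(nonzeroAt f i) = ∑ k, #(coordSupport (f k)) :=
  sum_card_bipartiteAbove_eq_sum_card_bipartiteBelow fun i k => f k i ≠ 0

variable [DecidableEq κ]

lemma card_le_card_of_ne_univ
    (hind : ∀ k : ι, LinearIndependent ℝ fun m : {m // m ≠ k} => f (m : ι))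
    {S : Finset ι} (hS : S ≠ univ) {V : Finset κ} (hV : ∀ k ∈ S, coordSupport (f k) ⊆ V) :
    #S ≤ #V := by
  obtain ⟨k₀, hk₀⟩ : ∃ k₀, k₀ ∉ S := by simpa [eq_univ_iff_forall] using hS
  have hsub : LinearIndependent ℝ fun k : S => f k :=
    (hind k₀).comp (fun k : S => (⟨k, ne_of_mem_of_not_mem k.2 hk₀⟩ : {m // m ≠ k₀}))
      fun k l h => Subtype.ext (congrArg Subtype.val h :)
  exact card_le_card_of_coordSupport_subset hsub hV

variable [DecidableEq ι]

lemma two_le_card_nonzeroAt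
    (hind : ∀ k : ι, LinearIndependent ℝ fun m : {m // m ≠ k} => f (m : ι))
    (hcard : Fintype.card κ < Fintype.card ι) (i : κ) : 2 ≤ #(nonzeroAt f i) := by
  by_contra! h
  have : Nonempty ι := Fintype.card_pos_iff.1 (by omega)
  obtain ⟨k₀, hk₀⟩ := card_le_one_iff_subset_singleton.1 (Nat.le_of_lt_succ h)
  have hV : ∀ k ∈ univ.erase k₀, coordSupport (f k) ⊆ univ.erase i := by
    intro k hk l hl
    refine mem_erase.2 ⟨?_, mem_univ l⟩
    rintro rfl
    exact (mem_erase.1 hk).1 (mem_singleton.1 (hk₀ (mem_nonzeroAt.2 hl)))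
  have := card_le_card_of_ne_univ hind (by simp [Finset.ext_iff]) hV
  simp only [card_erase_of_mem (mem_univ _), card_univ] at this
  have : 0 < Fintype.card κ := Fintype.card_pos_iff.2 ⟨i⟩
  omega

lemma card_nonzeroAt_eq_two
    (hind : ∀ k : ι, LinearIndependent ℝ fun m : {m // m ≠ k} => f (m : ι))
    (hcard : Fintype.card ι = Fintype.card κ + 1) (hsupp : ∀ k, #(coordSupport (f k)) ≤ 2)
    (htwo : ∃ k l, k ≠ l ∧ #(coordSupport (f k)) ≤ 1 ∧ #(coordSupport (f l)) ≤ 1) (i : κ) :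
    #(nonzeroAt f i) = 2 := by
  obtain ⟨k, l, hkl, hk, hl⟩ := htwo
  have hl' : l ∈ univ.erase k := mem_erase.2 ⟨hkl.symm, mem_univ l⟩
  have hsum : ∑ k, #(coordSupport (f k)) ≤ ∑ _i : κ, 2 := by
    have hrest := sum_le_card_nsmul ((univ.erase k).erase l) _ 2 fun k _ => hsupp k
    rw [card_erase_of_mem hl', card_erase_of_mem (mem_univ k), card_univ, hcard] at hrest
    rw [← add_sum_erase _ _ (mem_univ k), ← add_sum_erase _ _ hl', sum_const, card_univ]
    have := Fintype.one_lt_card_iff.2 ⟨k, l, hkl⟩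
    rw [hcard] at this
    simp only [smul_eq_mul] at hrest ⊢
    omega
  have hge : ∀ i ∈ univ, 2 ≤ #(nonzeroAt f i) :=
    fun i _ => two_le_card_nonzeroAt hind (by rw [hcard]; omega) i
  have heq := (sum_eq_sum_iff_of_le hge).1
    (le_antisymm (sum_le_sum hge) ((sum_card_nonzeroAt (f := f)).trans_le hsum))
  exact (heq i (mem_univ i)).symm

end ProperSubfamilies

lemma injOn_update_range_add_one {α : Type*} {u : ℕ → α} {m : ℕ}
    (hu : Set.InjOn u (range (m + 1))) {a : α} (ha : ∀ p ≤ m, u p ≠ a) :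
    Set.InjOn (Function.update u (m + 1) a) (range (m + 2)) := by
  have heq : Set.EqOn (Function.update u (m + 1) a) u (range (m + 1)) := fun p hp =>
    Function.update_of_ne (by simp at hp; omega) _ _
  rw [range_add_one, coe_insert, Set.injOn_insert (by simp), heq.injOn_iff, heq.image_eq,
    Function.update_self]
  refine ⟨hu, ?_⟩
  rintro ⟨p, hp, hpa⟩
  exact ha p (by simp at hp; omega) hpa

section SupportChain

variable {ι κ : Type*} [Fintype κ] [DecidableEq κ] {f : ι → EuclideanSpace ℝ κ} {m : ℕ}
  {v : ℕ → κ} {g : ℕ → ι}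

structure IsSupportChain (f : ι → EuclideanSpace ℝ κ) (m : ℕ) (v : ℕ → κ) (g : ℕ → ι) :
    Prop where
  injOn_coord : Set.InjOn v (range (m + 1))
  injOn_vec : Set.InjOn g (range (m + 1))
  coordSupport_zero : coordSupport (f (g 0)) = {v 0}
  coordSupport_succ : ∀ p < m, coordSupport (f (g (p + 1))) = {v p, v (p + 1)}

namespace IsSupportChain

lemma mem_coordSupport_self (hc : IsSupportChain f m v g) {p : ℕ} (hp : p ≤ m) :
    v p ∈ coordSupport (f (g p)) := by
  cases p with
  | zero => simp [hc.coordSupport_zero]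
  | succ p => simp [hc.coordSupport_succ p (by omega)]

lemma exists_le_of_mem_coordSupport (hc : IsSupportChain f m v g) {q : ℕ} (hq : q ≤ m) {i : κ}
    (hi : i ∈ coordSupport (f (g q))) : ∃ p ≤ q, v p = i := by
  cases q with
  | zero => exact ⟨0, le_rfl, (mem_singleton.1 (hc.coordSupport_zero ▸ hi)).symm⟩
  | succ q =>
    rw [hc.coordSupport_succ q (by omega), mem_insert, mem_singleton] at hi
    rcases hi with rfl | rfl
    exacts [⟨q, by omega, rfl⟩, ⟨q + 1, le_rfl, rfl⟩]

variable [Fintype ι] {k : ι}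

lemma ne_of_mem_nonzeroAt_last (hc : IsSupportChain f m v g) (hk : k ∈ nonzeroAt f (v m))
    (hne : k ≠ g m) {q : ℕ} (hq : q ≤ m) : g q ≠ k := by
  rintro rfl
  obtain ⟨p, hpq, hp⟩ := hc.exists_le_of_mem_coordSupport hq (mem_nonzeroAt.1 hk)
  have : p = m := hc.injOn_coord (by simp; omega) (by simp) hp
  exact hne (by rw [show q = m by omega])

variable [DecidableEq ι]

lemma notMem_image_of_mem_nonzeroAt_last (hc : IsSupportChain f m v g) (hk : k ∈ nonzeroAt f (v m))
    (hne : k ≠ g m) : k ∉ (range (m + 1)).image g := by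
  simpa using fun q hq => hc.ne_of_mem_nonzeroAt_last hk hne (q := q) (by omega)

lemma nonzeroAt_eq (hH : ∀ i, #(nonzeroAt f i) = 2) (hc : IsSupportChain f m v g) {p : ℕ}
    (hp : p < m) : nonzeroAt f (v p) = {g p, g (p + 1)} := by
  have hne : g p ≠ g (p + 1) := fun h =>
    absurd (hc.injOn_vec (by simp; omega) (by simp; omega) h) (by omega)
  refine (eq_of_subset_of_card_le ?_ (by rw [hH, card_pair hne])).symm
  rw [insert_subset_iff, singleton_subset_iff, mem_nonzeroAt, mem_nonzeroAt,
    hc.coordSupport_succ p hp]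
  exact ⟨hc.mem_coordSupport_self hp.le, mem_insert_self _ _⟩

lemma notMem_coordSupport_of_mem_nonzeroAt_last (hH : ∀ i, #(nonzeroAt f i) = 2)
    (hc : IsSupportChain f m v g) (hk : k ∈ nonzeroAt f (v m)) (hne : k ≠ g m) {p : ℕ}
    (hp : p < m) : v p ∉ coordSupport (f k) := by
  intro h
  have h' := hc.nonzeroAt_eq hH hp ▸ mem_nonzeroAt.2 h
  rw [mem_insert, mem_singleton] at h'
  rcases h' with h' | h'
  exacts [hc.ne_of_mem_nonzeroAt_last hk hne (q := p) (by omega) h'.symm,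
    hc.ne_of_mem_nonzeroAt_last hk hne (q := p + 1) (by omega) h'.symm]

lemma exists_mem_coordSupport_ne
    (hind : ∀ k : ι, LinearIndependent ℝ fun m : {m // m ≠ k} => f (m : ι))
    (hcard : Fintype.card ι = Fintype.card κ + 1) (hc : IsSupportChain f m v g)
    (hm : m + 1 < Fintype.card κ) (hk : k ∈ nonzeroAt f (v m)) (hne : k ≠ g m) :
    ∃ w ∈ coordSupport (f k), w ≠ v m := by
  by_contra! h
  have hS : #(insert k ((range (m + 1)).image g)) = m + 2 := by
    rw [card_insert_of_notMem (hc.notMem_image_of_mem_nonzeroAt_last hk hne),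
      card_image_of_injOn hc.injOn_vec, card_range]
  have hV : ∀ l ∈ insert k ((range (m + 1)).image g),
      coordSupport (f l) ⊆ (range (m + 1)).image v := by
    intro l hl i hi
    rcases mem_insert.1 hl with rfl | hl
    · exact mem_image.2 ⟨m, by simp, (h i hi).symm⟩
    · obtain ⟨q, hq, rfl⟩ := mem_image.1 hl
      obtain ⟨p, hpq, rfl⟩ := hc.exists_le_of_mem_coordSupport (by simp at hq; omega) hi
      exact mem_image_of_mem v (by simp at hq ⊢; omega)
  have hlt := card_le_card_of_ne_univ hind (fun h => by
    have := congrArg card h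
    rw [hS, card_univ, hcard] at this
    omega) hV
  rw [hS] at hlt
  have := card_image_le.trans_lt' hlt
  simp at this

lemma exists_succ (hind : ∀ k : ι, LinearIndependent ℝ fun m : {m // m ≠ k} => f (m : ι))
    (hcard : Fintype.card ι = Fintype.card κ + 1) (hH : ∀ i, #(nonzeroAt f i) = 2)
    (hsupp : ∀ k, #(coordSupport (f k)) ≤ 2) (hc : IsSupportChain f m v g)
    (hm : m + 1 < Fintype.card κ) : ∃ v' g', IsSupportChain f (m + 1) v' g' := by
  obtain ⟨k, hk, hne⟩ := exists_mem_ne (s := nonzeroAt f (v m)) (by rw [hH]; omega) (g m)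
  obtain ⟨w, hw, hwm⟩ := hc.exists_mem_coordSupport_ne hind hcard hm hk hne
  have hvm : v m ∈ coordSupport (f k) := mem_nonzeroAt.1 hk
  have hk_supp : coordSupport (f k) = {v m, w} := (eq_of_subset_of_card_le
    (insert_subset hvm (singleton_subset_iff.2 hw))
    (by rw [card_pair hwm.symm]; exact hsupp k)).symm
  have hvw : ∀ p ≤ m, v p ≠ w := by
    intro p hp hpw
    rcases hp.lt_or_eq with hp | rfl
    · exact hc.notMem_coordSupport_of_mem_nonzeroAt_last hH hk hne hp (hpw ▸ hw)
    · exact hwm hpw.symm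
  refine ⟨Function.update v (m + 1) w, Function.update g (m + 1) k,
    injOn_update_range_add_one hc.injOn_coord hvw,
    injOn_update_range_add_one hc.injOn_vec fun q hq => hc.ne_of_mem_nonzeroAt_last hk hne hq, ?_,
    fun p hp => ?_⟩
  · simpa [Function.update_of_ne] using hc.coordSupport_zero
  · rcases (Nat.lt_succ_iff.1 hp).lt_or_eq with hp | rfl
    · rw [Function.update_of_ne (by omega : p + 1 ≠ m + 1),
        Function.update_of_ne (by omega : p ≠ m + 1),
        Function.update_of_ne (by omega : p + 1 ≠ m + 1)]
      exact hc.coordSupport_succ p hp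
    · simpa [Function.update_of_ne] using hk_supp

lemma coordSupport_eq_singleton_last (hH : ∀ i, #(nonzeroAt f i) = 2)
    (hc : IsSupportChain f m v g) (hm : m + 1 = Fintype.card κ) (hk : k ∈ nonzeroAt f (v m))
    (hne : k ≠ g m) : coordSupport (f k) = {v m} := by
  have hv : (range (m + 1)).image v = univ :=
    eq_univ_of_card _ (by rw [card_image_of_injOn hc.injOn_coord, card_range, hm])
  refine eq_singleton_iff_unique_mem.2 ⟨mem_nonzeroAt.1 hk, fun i hi => ?_⟩
  obtain ⟨p, hp, rfl⟩ := mem_image.1 (hv ▸ mem_univ i)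
  rcases (Nat.lt_succ_iff.1 (mem_range.1 hp)).lt_or_eq with hp | rfl
  · exact absurd hi (hc.notMem_coordSupport_of_mem_nonzeroAt_last hH hk hne hp)
  · rfl

lemma insert_image_eq_univ (hcard : Fintype.card ι = Fintype.card κ + 1)
    (hc : IsSupportChain f m v g) (hm : m + 1 = Fintype.card κ) (hk : k ∈ nonzeroAt f (v m))
    (hne : k ≠ g m) : insert k ((range (m + 1)).image g) = univ :=
  eq_univ_of_card _ (by rw [card_insert_of_notMem (hc.notMem_image_of_mem_nonzeroAt_last hk hne),
    card_image_of_injOn hc.injOn_vec, card_range, hcard, hm])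

end IsSupportChain

variable [Fintype ι] [DecidableEq ι]

lemma exists_isSupportChain
    (hind : ∀ k : ι, LinearIndependent ℝ fun m : {m // m ≠ k} => f (m : ι))
    (hcard : Fintype.card ι = Fintype.card κ + 1) (hH : ∀ i, #(nonzeroAt f i) = 2)
    (hsupp : ∀ k, #(coordSupport (f k)) ≤ 2) {k₀ : ι} {a : κ} (ha : coordSupport (f k₀) = {a}) :
    ∀ m < Fintype.card κ, ∃ v g, IsSupportChain f m v g
  | 0, _ => ⟨fun _ => a, fun _ => k₀, by simp [Set.InjOn], by simp [Set.InjOn], ha, by simp⟩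
  | m + 1, hm =>
    have ⟨_, _, hc⟩ := exists_isSupportChain hind hcard hH hsupp ha m (by omega)
    hc.exists_succ hind hcard hH hsupp hm

end SupportChain

lemma setOf_eq_or_eq_neg_eq {ι E : Type*} [InvolutiveNeg E] (f : ι → E) (P : E → Prop)
    (hf : ∀ k, ∃ u, P u ∧ (f k = u ∨ f k = -u)) (hP : ∀ u, P u → ∃ k, f k = u ∨ f k = -u) :
    {x | ∃ k, x = f k ∨ x = -f k} = {x | ∃ u, P u ∧ (x = u ∨ x = -u)} := by
  ext x
  constructor
  · rintro ⟨k, hx⟩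
    obtain ⟨u, hu, hk⟩ := hf k
    exact ⟨u, hu, by rcases hx with rfl | rfl <;> rcases hk with h | h <;> simp [h]⟩
  · rintro ⟨u, hu, hx⟩
    obtain ⟨k, hk⟩ := hP u hu
    exact ⟨k, by rcases hx with rfl | rfl <;> rcases hk with h | h <;> simp [h]⟩

lemma eq_or_eq_neg_of_eq_smul {E : Type*} [AddCommGroup E] [Module ℝ E] {x y : E} {c : ℝ}
    (hc : c = 1 ∨ c = -1) (h : x = c • y) : x = y ∨ x = -y := by
  rcases hc with rfl | rfl
  exacts [Or.inl (by simpa using h), Or.inr (by simpa using h)]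

section ChainSign

variable {ι κ : Type*} [Fintype κ] [DecidableEq κ] {f : ι → EuclideanSpace ℝ κ} {m : ℕ}
  {v : ℕ → κ} {g : ℕ → ι}

/-- Chosen so that `f (g (p + 1)) = ± (chainBasis f v g p - chainBasis f v g (p + 1))`. -/
def chainSign (f : ι → EuclideanSpace ℝ κ) (v : ℕ → κ) (g : ℕ → ι) : ℕ → ℝ
  | 0 => f (g 0) (v 0)
  | p + 1 => -(chainSign f v g p * f (g (p + 1)) (v p) * f (g (p + 1)) (v (p + 1)))

def chainBasis (f : ι → EuclideanSpace ℝ κ) (v : ℕ → κ) (g : ℕ → ι) (p : ℕ) :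
    EuclideanSpace ℝ κ :=
  chainSign f v g p • EuclideanSpace.single (v p) 1

namespace IsSupportChain

lemma chainSign_eq_one_or_eq_neg_one
    (hval : ∀ k, ∀ i ∈ coordSupport (f k), f k i = 1 ∨ f k i = -1) (hc : IsSupportChain f m v g) :
    ∀ p ≤ m, chainSign f v g p = 1 ∨ chainSign f v g p = -1
  | 0, _ => hval _ _ (hc.mem_coordSupport_self (Nat.zero_le m))
  | p + 1, hp => by
    have hsupp := hc.coordSupport_succ p (by omega)
    rcases hc.chainSign_eq_one_or_eq_neg_one hval p (by omega) with hε | hε <;>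
    rcases hval (g (p + 1)) (v p) (by simp [hsupp]) with hs | hs <;>
    rcases hval (g (p + 1)) (v (p + 1)) (by simp [hsupp]) with ht | ht <;>
    simp [chainSign, hε, hs, ht]

lemma eq_chainBasis_zero (hc : IsSupportChain f m v g) : f (g 0) = chainBasis f v g 0 := by
  rw [eq_sum_coordSupport (f (g 0)), hc.coordSupport_zero, sum_singleton, chainBasis, chainSign]

lemma eq_or_eq_neg_chainBasis_sub
    (hval : ∀ k, ∀ i ∈ coordSupport (f k), f k i = 1 ∨ f k i = -1) (hc : IsSupportChain f m v g)
    {p : ℕ} (hp : p < m) :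
    f (g (p + 1)) = chainBasis f v g p - chainBasis f v g (p + 1) ∨
      f (g (p + 1)) = -(chainBasis f v g p - chainBasis f v g (p + 1)) := by
  have hsupp := hc.coordSupport_succ p hp
  have hne : v p ≠ v (p + 1) := fun h =>
    absurd (hc.injOn_coord (by simp; omega) (by simp; omega) h) (by omega)
  set ε := chainSign f v g p
  set s := f (g (p + 1)) (v p)
  set t := f (g (p + 1)) (v (p + 1))
  have hε2 : ε * ε = 1 := mul_self_eq_one_iff.2 (hc.chainSign_eq_one_or_eq_neg_one hval p hp.le)
  have hs2 : s * s = 1 := mul_self_eq_one_iff.2 (hval _ _ (by simp [hsupp]))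
  refine eq_or_eq_neg_of_eq_smul (c := ε * s)
    (mul_self_eq_one_iff.1 (by linear_combination s * s * hε2 + hs2)) ?_
  have h₁ : ε * s * ε = s := by linear_combination s * hε2
  have h₂ : ε * s * -(ε * s * t) = -t := by linear_combination (-(s * s * t)) * hε2 - t * hs2
  rw [eq_sum_coordSupport (f (g (p + 1))), hsupp, sum_pair hne, chainBasis, chainBasis, chainSign,
    smul_sub, smul_smul, smul_smul, h₁, h₂, neg_smul, sub_neg_eq_add]

lemma eq_or_eq_neg_chainBasis_last
    (hval : ∀ k, ∀ i ∈ coordSupport (f k), f k i = 1 ∨ f k i = -1) (hc : IsSupportChain f m v g)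
    {k : ι} (hk : coordSupport (f k) = {v m}) :
    f k = chainBasis f v g m ∨ f k = -chainBasis f v g m := by
  have hε2 := mul_self_eq_one_iff.2 (hc.chainSign_eq_one_or_eq_neg_one hval m le_rfl)
  have hs2 := mul_self_eq_one_iff.2 (hval k (v m) (by simp [hk]))
  refine eq_or_eq_neg_of_eq_smul (c := f k (v m) * chainSign f v g m)
    (mul_self_eq_one_iff.1 (by linear_combination f k (v m) * f k (v m) * hε2 + hs2)) ?_
  conv_lhs => rw [eq_sum_coordSupport (f k), hk, sum_singleton]
  rw [chainBasis, smul_smul, mul_assoc, hε2, mul_one]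

variable [Fintype ι] [DecidableEq ι] {k : ι}

lemma setOf_eq_or_eq_neg_eq_chainBasis
    (hval : ∀ k, ∀ i ∈ coordSupport (f k), f k i = 1 ∨ f k i = -1)
    (hcard : Fintype.card ι = Fintype.card κ + 1) (hH : ∀ i, #(nonzeroAt f i) = 2)
    (hc : IsSupportChain f m v g) (hm : m + 1 = Fintype.card κ) (hk : k ∈ nonzeroAt f (v m))
    (hne : k ≠ g m) :
    {x | ∃ k, x = f k ∨ x = -f k} = {x | ∃ u, (u = chainBasis f v g 0 ∨ u = chainBasis f v g m ∨
      ∃ i < m, chainBasis f v g i - chainBasis f v g (i + 1) = u) ∧ (x = u ∨ x = -u)} := by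
  have hlast :=
    hc.eq_or_eq_neg_chainBasis_last hval (hc.coordSupport_eq_singleton_last hH hm hk hne)
  refine setOf_eq_or_eq_neg_eq f _ (fun l => ?_) ?_
  · rcases mem_insert.1 (hc.insert_image_eq_univ hcard hm hk hne ▸ mem_univ l) with rfl | hl
    · exact ⟨_, .inr (.inl rfl), hlast⟩
    obtain ⟨q, hq, rfl⟩ := mem_image.1 hl
    cases q with
    | zero => exact ⟨_, .inl rfl, .inl hc.eq_chainBasis_zero⟩
    | succ p => exact ⟨_, .inr (.inr ⟨p, by simp at hq; omega, rfl⟩),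
        hc.eq_or_eq_neg_chainBasis_sub hval (by simp at hq; omega)⟩
  · rintro u (rfl | rfl | ⟨i, hi, rfl⟩)
    exacts [⟨g 0, .inl hc.eq_chainBasis_zero⟩, ⟨k, hlast⟩,
      ⟨g (i + 1), hc.eq_or_eq_neg_chainBasis_sub hval hi⟩]

end IsSupportChain

end ChainSign

/-- Let `f 0, …, f n` be `n + 1` roots of `Bₙ` in `ℝⁿ` (`n ≥ 2`) such that any
`n` of them are linearly independent.  If at least two of the vectors are short roots `± e i`,
then, for some permutation `σ` and signs `ε`, setting `bᵢ = εᵢ e_{σ(i)}` (here `b` is indexed by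
`0, …, n-1`), the set `{± f k}` is `{± b₀} ∪ {± (bᵢ - bᵢ₊₁) : 0 ≤ i ≤ n-2} ∪ {± b_{n-1}}`:
the configuration of the Coxeter simplex `C̃ₙ`. -/
theorem family_Cn_of_two_short {n : ℕ} (hn : 2 ≤ n)
    (f : Fin (n + 1) → EuclideanSpace ℝ (Fin n))
    (hroot : ∀ k, IsRootB n (f k))
    (hind : ∀ k : Fin (n + 1),
      LinearIndependent ℝ (fun m : {m : Fin (n + 1) // m ≠ k} => f (m : Fin (n + 1))))
    (htwo : ∃ k l : Fin (n + 1), k ≠ l ∧ IsShortRootB n (f k) ∧ IsShortRootB n (f l)) :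
    ∃ (σ : Equiv.Perm (Fin n)) (ε : Fin n → ℝ), (∀ i, ε i = 1 ∨ ε i = -1) ∧
      ∃ b : ℕ → EuclideanSpace ℝ (Fin n), (∀ i : Fin n, b i = ε i • stdE n (σ i)) ∧
        {v : EuclideanSpace ℝ (Fin n) | ∃ k, v = f k ∨ v = -f k} =
          {v : EuclideanSpace ℝ (Fin n) | v = b 0 ∨ v = -b 0 ∨ v = b (n - 1) ∨ v = -b (n - 1)} ∪
          {v : EuclideanSpace ℝ (Fin n) | ∃ i : ℕ, i ≤ n - 2 ∧
            (v = b i - b (i + 1) ∨ v = -(b i - b (i + 1)))} := by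
  have hcard : Fintype.card (Fin (n + 1)) = Fintype.card (Fin n) + 1 := by simp
  have hsupp : ∀ k, #(coordSupport (f k)) ≤ 2 := fun k => (hroot k).card_coordSupport_le
  have hval : ∀ k, ∀ i ∈ coordSupport (f k), f k i = 1 ∨ f k i = -1 :=
    fun k _ hi => (hroot k).apply_eq_one_or_eq_neg_one hi
  obtain ⟨k₀, l₀, hkl, hk₀, hl₀⟩ := htwo
  obtain ⟨a, ha⟩ := hk₀.exists_coordSupport_eq
  obtain ⟨a', ha'⟩ := hl₀.exists_coordSupport_eq
  have hH := card_nonzeroAt_eq_two hind hcard hsupp ⟨k₀, l₀, hkl, by simp [ha], by simp [ha']⟩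
  obtain ⟨v, g, hc⟩ := exists_isSupportChain hind hcard hH hsupp ha (n - 1) (by simp; omega)
  obtain ⟨k, hk, hne⟩ :=
    exists_mem_ne (s := nonzeroAt f (v (n - 1))) (by rw [hH]; omega) (g (n - 1))
  have hm : n - 1 + 1 = Fintype.card (Fin n) := by simp; omega
  have hσ : Function.Bijective fun i : Fin n => v i := Finite.injective_iff_bijective.1
    fun i j h => Fin.ext (hc.injOn_coord (by simp; omega) (by simp; omega) h)
  refine ⟨Equiv.ofBijective _ hσ, fun i => chainSign f v g i,
    fun i => hc.chainSign_eq_one_or_eq_neg_one hval i (by omega), chainBasis f v g,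
    fun _ => rfl, ?_⟩
  rw [hc.setOf_eq_or_eq_neg_eq_chainBasis hval hcard hH hm hk hne]
  ext x
  simp only [Set.mem_ofPred_eq, Set.mem_union, or_and_right, exists_or, exists_eq_left,
    exists_exists_and_eq_and, or_assoc, show ∀ i, i < n - 1 ↔ i ≤ n - 2 by omega]
end
end

section
/- Let n ≥ 2 and let N be an integer with 2 ≤ N ≤ n. Consider the following n+1 vectors in ℝ^n: v = e_1 + e_2; the vectors e_j − e_{j+1} for every j with 2 ≤ j ≤ n−1; the vector e_N − e_1; and the vector e_n. Then any n of these n+1 vectors are linearly independent (and consequently, since they are n+1 vectors in ℝ^n, all n+1 together are linearly dependent). -/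
noncomputable section

/-- Let `2 ≤ N ≤ n` and consider the `n + 1` vectors of `ℝⁿ` (indices of the
standard basis `e 0, …, e (n-1)` starting from `0`): `e 0 + e 1`; `e j - e (j+1)` for
`1 ≤ j ≤ n - 2`; `e (N-1) - e 0`; and `e (n-1)`.  Then any `n` of these `n + 1` vectors are
linearly independent, and all `n + 1` together are linearly dependent.  (This is the normal
system of a simplex generating `B̃ₙ`.) -/
theorem Bn_normal_system_generic_position {n : ℕ} (hn : 2 ≤ n) (N : ℕ) (hN2 : 2 ≤ N)
    (hNn : N ≤ n)
    (e : ℕ → EuclideanSpace ℝ (Fin n)) (he : ∀ i : Fin n, e i = EuclideanSpace.single i 1)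
    (g : Fin (n + 1) → EuclideanSpace ℝ (Fin n))
    (hg0 : g 0 = e 0 + e 1)
    (hgmid : ∀ k : Fin (n + 1), 1 ≤ (k : ℕ) → (k : ℕ) ≤ n - 2 → g k = e k - e ((k : ℕ) + 1))
    (hgcyc : g ⟨n - 1, by omega⟩ = e (N - 1) - e 0)
    (hgmark : g ⟨n, by omega⟩ = e (n - 1)) :
    (∀ k : Fin (n + 1),
      LinearIndependent ℝ (fun m : {m : Fin (n + 1) // m ≠ k} => g (m : Fin (n + 1)))) ∧
      ¬ LinearIndependent ℝ g := by
  constructor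
  · intro k
    set S := Submodule.span ℝ
      (Set.range fun m : {m : Fin (n + 1) // m ≠ k} => g (m : Fin (n + 1))) with hSdef
    set K := (k : ℕ) with hKdef
    have hKle : K ≤ n := by have := k.isLt; omega
    have hgS : ∀ (j : ℕ) (hj : j < n + 1), j ≠ K → g ⟨j, hj⟩ ∈ S := by
      intro j hj hne
      exact Submodule.subset_span ⟨⟨⟨j, hj⟩, by simp only [ne_eq, Fin.ext_iff]; exact hne⟩, rfl⟩
    have hgmid' : ∀ j : ℕ, 1 ≤ j → j ≤ n - 2 → (hj : j < n + 1) → g ⟨j, hj⟩ = e j - e (j + 1) := by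
      intro j h1 h2 hj
      exact hgmid ⟨j, hj⟩ h1 h2
    -- basic steps
    have stepdown : ∀ i, 1 ≤ i → i ≤ n - 2 → i ≠ K → e (i + 1) ∈ S → e i ∈ S := by
      intro i h1 h2 hiK hmem
      have hgi := hgS i (by omega) hiK
      rw [hgmid' i h1 h2] at hgi
      have hh : e i = (e i - e (i + 1)) + e (i + 1) := by abel
      rw [hh]; exact S.add_mem hgi hmem
    have stepfw : ∀ i, 1 ≤ i → i ≤ n - 2 → i ≠ K → e i ∈ S → e (i + 1) ∈ S := by
      intro i h1 h2 hiK hmem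
      have hgi := hgS i (by omega) hiK
      rw [hgmid' i h1 h2] at hgi
      have hh : e (i + 1) = e i - (e i - e (i + 1)) := by abel
      rw [hh]; exact S.sub_mem hmem hgi
    have down : ∀ d i, 1 ≤ i → i + d = n - 1 → (∀ j, i ≤ j → j ≤ n - 2 → j ≠ K) →
        e (n - 1) ∈ S → e i ∈ S := by
      intro d
      induction d with
      | zero => intro i _ h _ hn1; rw [show i = n - 1 by omega]; exact hn1
      | succ d ih =>
        intro i h1 heq hj hn1
        exact stepdown i h1 (by omega) (hj i le_rfl (by omega))
          (ih (i + 1) (by omega) (by omega) (fun j a b => hj j (by omega) b) hn1)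
    have fw : ∀ d a, 1 ≤ a → a + d ≤ n - 1 → (∀ j, a ≤ j → j < a + d → j ≠ K) →
        e a ∈ S → e (a + d) ∈ S := by
      intro d
      induction d with
      | zero => intro a _ _ _ h; simpa using h
      | succ d ih =>
        intro a h1 h2 hj ha
        have h3 : e (a + d) ∈ S := ih a h1 (by omega) (fun j u v => hj j u (by omega)) ha
        have h4 := stepfw (a + d) (by omega) (by omega) (hj (a + d) (by omega) (by omega)) h3
        rw [show a + (d + 1) = (a + d) + 1 by omega]; exact h4
    have hg0S : 0 ≠ K → g 0 ∈ S := by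
      intro h0
      have h := hgS 0 (by omega) h0
      have h00 : (⟨0, by omega⟩ : Fin (n + 1)) = 0 := by ext; simp
      rwa [h00] at h
    have cyc : (∀ j, 1 ≤ j → j ≤ N - 2 → j ≠ K) → 0 ≠ K → e 0 + e (N - 1) ∈ S := by
      intro hj h0
      have main : ∀ d, d ≤ N - 2 → e 0 + e (1 + d) ∈ S := by
        intro d
        induction d with
        | zero =>
          intro _
          have hg0S' := hg0S h0
          rw [hg0] at hg0S'
          simpa using hg0S'
        | succ d ih =>
          intro hd
          have h1 : e 0 + e (1 + d) ∈ S := ih (by omega)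
          have hgd := hgS (1 + d) (by omega) (hj (1 + d) (by omega) (by omega))
          rw [hgmid' (1 + d) (by omega) (by omega)] at hgd
          have hh : e 0 + e (1 + (d + 1)) = (e 0 + e (1 + d)) - (e (1 + d) - e ((1 + d) + 1)) := by
            rw [show 1 + (d + 1) = (1 + d) + 1 by omega]; abel
          rw [hh]; exact S.sub_mem h1 hgd
      have h := main (N - 2) le_rfl
      rwa [show 1 + (N - 2) = N - 1 by omega] at h
    have hcycS : n - 1 ≠ K → g ⟨n - 1, by omega⟩ ∈ S := fun h => hgS (n - 1) (by omega) h
    have e0_of_cyc : e 0 + e (N - 1) ∈ S → n - 1 ≠ K → e 0 ∈ S := by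
      intro h2 hne
      have hcy := hcycS hne
      rw [hgcyc] at hcy
      have hh : e 0 = (2⁻¹ : ℝ) • ((e 0 + e (N - 1)) - (e (N - 1) - e 0)) := by
        module
      rw [hh]; exact S.smul_mem _ (S.sub_mem h2 hcy)
    have he1_of : e 0 ∈ S → 0 ≠ K → e 1 ∈ S := by
      intro he0 h0
      have hg0S' := hg0S h0
      rw [hg0] at hg0S'
      have hh : e 1 = (e 0 + e 1) - e 0 := by abel
      rw [hh]; exact S.sub_mem hg0S' he0
    have hmark : n ≠ K → e (n - 1) ∈ S := by
      intro h
      have hm := hgS n (by omega) h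
      rwa [hgmark] at hm
    -- the key claim
    have ekey : ∀ i : ℕ, i < n → e i ∈ S := by
      intro i hi
      rcases eq_or_lt_of_le hKle with hKn | hKn
      · -- K = n : marked vector removed
        have h2 := cyc (fun j a b => by omega) (by omega)
        have he0 : e 0 ∈ S := e0_of_cyc h2 (by omega)
        rcases Nat.eq_zero_or_pos i with h | h
        · rw [h]; exact he0
        · have he1 : e 1 ∈ S := he1_of he0 (by omega)
          have hf := fw (i - 1) 1 le_rfl (by omega) (fun j a b => by omega) he1
          rwa [show 1 + (i - 1) = i by omega] at hf
      · -- K ≤ n - 1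
        have hn1 : e (n - 1) ∈ S := hmark (by omega)
        rcases eq_or_lt_of_le (show K ≤ n - 1 by omega) with hKn1 | hKn1
        · -- K = n - 1 : cycle-closing edge removed
          have hAll : ∀ i, 1 ≤ i → i ≤ n - 1 → e i ∈ S := fun i a b =>
            down (n - 1 - i) i a (by omega) (fun j u v => by omega) hn1
          rcases Nat.eq_zero_or_pos i with h | h
          · have he1 : e 1 ∈ S := hAll 1 le_rfl (by omega)
            have hg0S' := hg0S (by omega)
            rw [hg0] at hg0S'
            have hh : e 0 = (e 0 + e 1) - e 1 := by abel
            rw [h, hh]; exact S.sub_mem hg0S' he1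
          · exact hAll i h (by omega)
        · rcases Nat.eq_zero_or_pos K with hK0 | hK0
          · -- K = 0 : first edge removed
            have hAll : ∀ i, 1 ≤ i → i ≤ n - 1 → e i ∈ S := fun i a b =>
              down (n - 1 - i) i a (by omega) (fun j u v => by omega) hn1
            rcases Nat.eq_zero_or_pos i with h | h
            · have hN1 : e (N - 1) ∈ S := hAll (N - 1) (by omega) (by omega)
              have hcy := hcycS (by omega)
              rw [hgcyc] at hcy
              have hh : e 0 = e (N - 1) - (e (N - 1) - e 0) := by abel
              rw [h, hh]; exact S.sub_mem hN1 hcy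
            · exact hAll i h (by omega)
          · -- 1 ≤ K ≤ n - 2 : a middle edge removed
            have hHigh : ∀ i, K + 1 ≤ i → i ≤ n - 1 → e i ∈ S := fun i a b =>
              down (n - 1 - i) i (by omega) (by omega) (fun j u v => by omega) hn1
            have he0 : e 0 ∈ S := by
              rcases le_or_gt K (N - 2) with hc | hc
              · have hN1 : e (N - 1) ∈ S := hHigh (N - 1) (by omega) (by omega)
                have hcy := hcycS (by omega)
                rw [hgcyc] at hcy
                have hh : e 0 = e (N - 1) - (e (N - 1) - e 0) := by abel
                rw [hh]; exact S.sub_mem hN1 hcy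
              · exact e0_of_cyc (cyc (fun j a b => by omega) (by omega)) (by omega)
            rcases Nat.eq_zero_or_pos i with h | h
            · rw [h]; exact he0
            · rcases le_or_gt i K with hc | hc
              · have he1 : e 1 ∈ S := he1_of he0 (by omega)
                have hf := fw (i - 1) 1 le_rfl (by omega) (fun j a b => by omega) he1
                rwa [show 1 + (i - 1) = i by omega] at hf
              · exact hHigh i (by omega) (by omega)
    have key : ∀ i : Fin n, EuclideanSpace.single i 1 ∈ S := by
      intro i
      have h := ekey i i.isLt
      rwa [he i] at h
    have htop : ⊤ ≤ S := by
      rw [← (EuclideanSpace.basisFun (Fin n) ℝ).toBasis.span_eq]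
      apply Submodule.span_le.mpr
      rintro x ⟨i, rfl⟩
      have hb : (EuclideanSpace.basisFun (Fin n) ℝ).toBasis i = EuclideanSpace.single i 1 := by
        simp [EuclideanSpace.basisFun_apply]
      rw [hb]; exact key i
    have hcard : Fintype.card {m : Fin (n + 1) // m ≠ k} =
        Module.finrank ℝ (EuclideanSpace ℝ (Fin n)) := by
      simp [Fintype.card_subtype_compl]
    exact linearIndependent_of_top_le_span_of_card_eq_finrank htop hcard
  · intro h
    have h1 := h.fintype_card_le_finrank
    simp only [Fintype.card_fin, finrank_euclideanSpace_fin] at h1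
    omega
end
end

section
/- Let n ≥ 2, let k be an integer with 2 ≤ k ≤ n, let i_1,…,i_k be pairwise distinct indices in {1,…,n}, and let s_1,…,s_k ∈ {+1,−1}. Define vectors v_1,…,v_k in ℝ^n by v_j = e_{i_j} + s_j · e_{i_{j+1}} for 1 ≤ j ≤ k, where indices are taken cyclically (i_{k+1} = i_1). Then the vectors v_1,…,v_k are linearly dependent if and only if the number of indices j with s_j = +1 is even. -/
/-!
Expanding `∑ c j • v j` in the independent vectors `e (i j)` shows that a linear relation among
the `v j` is exactly a nonzero `c` with `c (j + 1) = -s j * c j` for all `j`, indices mod `k`.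
Going once around the cycle, such a `c` exists iff `∏ j, -s j = 1`, and this product is
`(-1) ^ (number of red edges)`.
-/

open Finset

theorem Fin.partialProd_last {M : Type*} [CommMonoid M] {n : ℕ} (f : Fin n → M) :
    partialProd f (last n) = ∏ i, f i := by
  simp [partialProd, List.take_of_length_le, List.prod_ofFn]

theorem Fin.mul_partialProd_castSucc_last {M : Type*} [CommMonoid M] {m : ℕ}
    (a : Fin (m + 1) → M) : a (last m) * partialProd a (last m).castSucc = ∏ j, a j := by
  rw [mul_comm, ← partialProd_succ, succ_last, partialProd_last]

theorem finRotate_castSucc {m : ℕ} (i : Fin m) : finRotate (m + 1) i.castSucc = i.succ :=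
  finRotate_of_lt i.isLt

section CyclicRecurrence

variable {R : Type*} [CommRing R] {m : ℕ} {a c : Fin (m + 1) → R}

theorem eq_apply_zero_mul_partialProd (hc : ∀ j, c (finRotate (m + 1) j) = a j * c j)
    (j : Fin (m + 1)) : c j = c 0 * Fin.partialProd a j.castSucc := by
  induction j using Fin.induction with
  | zero => simp
  | succ i ih =>
    rw [← Fin.succ_castSucc, Fin.partialProd_succ, ← finRotate_castSucc, hc, ih]
    ring

theorem exists_ne_zero_apply_finRotate_eq_mul_iff [IsDomain R] :
    (∃ c : Fin (m + 1) → R, c ≠ 0 ∧ ∀ j, c (finRotate (m + 1) j) = a j * c j) ↔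
      ∏ j, a j = 1 := by
  constructor
  · rintro ⟨c, hc0, hc⟩
    have hc_eq := eq_apply_zero_mul_partialProd hc
    have h0 : c 0 ≠ 0 := fun h => hc0 (funext fun j => by simp [hc_eq j, h])
    have : c 0 * ∏ j, a j = c 0 := by
      calc c 0 * ∏ j, a j = a (Fin.last m) * c (Fin.last m) := by
            rw [hc_eq (Fin.last m), ← Fin.mul_partialProd_castSucc_last]; ring
        _ = c 0 := by rw [← hc, finRotate_last]
    exact (mul_eq_left₀ h0).1 this
  · intro ha
    refine ⟨fun j => Fin.partialProd a j.castSucc, fun h => by simpa using congrFun h 0, ?_⟩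
    intro j
    induction j using Fin.lastCases with
    | last => simp [Fin.mul_partialProd_castSucc_last, ha]
    | cast i =>
      dsimp only
      rw [finRotate_castSucc, ← Fin.succ_castSucc, Fin.partialProd_succ, mul_comm]

end CyclicRecurrence

theorem sum_smul_add_smul_comp_perm {R M ι : Type*} [CommRing R] [AddCommGroup M] [Module R M]
    [Fintype ι] (b : ι → M) (σ : Equiv.Perm ι) (t c : ι → R) :
    ∑ j, c j • (b j + t j • b (σ j)) = ∑ j, (c (σ j) + t j * c j) • b (σ j) := by
  simp only [smul_add, smul_smul, add_smul, sum_add_distrib, mul_comm (c _)]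
  rw [Equiv.sum_comp σ fun j => c j • b j]

theorem LinearIndependent.not_linearIndependent_add_smul_comp_perm_iff {R M ι : Type*}
    [CommRing R] [AddCommGroup M] [Module R M] [Fintype ι] {b : ι → M}
    (hb : LinearIndependent R b) (σ : Equiv.Perm ι) (t : ι → R) :
    ¬ LinearIndependent R (fun j => b j + t j • b (σ j)) ↔
      ∃ c : ι → R, c ≠ 0 ∧ ∀ j, c (σ j) = -t j * c j := by
  have hbσ := Fintype.linearIndependent_iff.1 (hb.comp σ σ.injective)
  simp only [Fintype.not_linearIndependent_iff, sum_smul_add_smul_comp_perm, Function.ne_iff,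
    neg_mul, eq_neg_iff_add_eq_zero]
  constructor
  · rintro ⟨c, hc, hc0⟩
    exact ⟨c, hc0, hbσ _ hc⟩
  · rintro ⟨c, hc0, hc⟩
    exact ⟨c, by simp [hc], hc0⟩

theorem prod_neg_eq_neg_one_pow_card {R ι : Type*} [CommRing R] [DecidableEq R] [Fintype ι]
    {s : ι → R} (hs : ∀ j, s j = 1 ∨ s j = -1) :
    ∏ j, -s j = (-1) ^ #{j | s j = 1} := by
  calc ∏ j, -s j = ∏ j, if s j = 1 then -1 else 1 :=
        prod_congr rfl fun j _ => by rcases hs j with h | h <;> simp [h, eq_comm]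
    _ = (-1) ^ #{j | s j = 1} := by rw [prod_ite, prod_const, prod_const_one, mul_one]

/-- Let `i 0, …, i (k-1)` (`2 ≤ k ≤ n`) be pairwise distinct indices and
`s j ∈ {1, -1}` signs, and let `v j = e (i j) + s j • e (i (j+1))` with `j + 1` taken cyclically
mod `k` (the edge vectors of a cycle in a signed graph, an edge being red when `s j = 1` and
black when `s j = -1`).  Then `v` is linearly dependent iff the number of `j` with `s j = 1`
is even. -/
theorem cycle_dependent_iff_even_red {n : ℕ} (k : ℕ) (hk2 : 2 ≤ k)
    (idx : Fin k → Fin n) (hidx : Function.Injective idx)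
    (s : Fin k → ℝ) (hs : ∀ j, s j = 1 ∨ s j = -1)
    (v : Fin k → EuclideanSpace ℝ (Fin n))
    (hv : ∀ j : Fin k, v j = EuclideanSpace.single (idx j) 1 +
      s j • EuclideanSpace.single (idx ⟨((j : ℕ) + 1) % k, Nat.mod_lt _ (by omega)⟩) 1) :
    ¬ LinearIndependent ℝ v ↔ Even (Finset.univ.filter fun j => s j = 1).card := by
  obtain ⟨m, rfl⟩ : ∃ m, k = m + 1 := ⟨k - 1, by omega⟩
  have hv_rotate : v = fun j => EuclideanSpace.single (idx j) 1 +
      s j • EuclideanSpace.single (idx (finRotate (m + 1) j)) 1 := by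
    funext j
    rw [hv j, finRotate_apply]
    congr 4
    ext
    simp [Fin.val_add]
  have hb : LinearIndependent ℝ fun j => EuclideanSpace.single (idx j) (1 : ℝ) :=
    EuclideanSpace.orthonormal_single.linearIndependent.comp idx hidx
  rw [hv_rotate, hb.not_linearIndependent_add_smul_comp_perm_iff,
    exists_ne_zero_apply_finRotate_eq_mul_iff, prod_neg_eq_neg_one_pow_card hs,
    neg_one_pow_eq_one_iff_even (by norm_num)]
end

section
/- Let n ≥ 3 and let N₁, N₂ be integers with 2 ≤ N₁ ≤ N₂ and N₁ + N₂ ≤ n + 1; set m = n − N₂ + 1. Consider the following n+1 vectors in ℝ^n: e_1 + e_2; the vectors e_j − e_{j+1} for 2 ≤ j ≤ N₁ − 1; the vector e_{N₁} − e_1; the vectors e_j − e_{j+1} for N₁ ≤ j ≤ n − N₂; the vector e_m + e_{m+1}; the vectors e_j − e_{j+1} for m+1 ≤ j ≤ n−1; and the vector e_n − e_m. Then any n of these n+1 vectors are linearly independent (and consequently, being n+1 vectors in ℝ^n, all n+1 together are linearly dependent). -/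
noncomputable section

lemma tele1 {V : Type*} [AddCommGroup V] (f : ℕ → V) {a b : ℕ} (hab : a ≤ b) :
    ∑ k ∈ Finset.Ico a b, (f k - f (k + 1)) = f a - f b := by
  induction b, hab using Nat.le_induction with
  | base => simp
  | succ b hb ih => rw [Finset.sum_Ico_succ_top (by omega), ih]; abel

lemma tele2 {V : Type*} [AddCommGroup V] (f : ℕ → V) {a b : ℕ} (hab : a ≤ b) :
    ∑ k ∈ Finset.Ico a b, (f (k - 1) - f k) = f (a - 1) - f (b - 1) := by
  induction b, hab using Nat.le_induction with
  | base => simp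
  | succ b hb ih =>
    rw [Finset.sum_Ico_succ_top (by omega), ih, show b + 1 - 1 = b from rfl]
    abel

lemma transfer {V : Type*} [AddCommGroup V] [Module ℝ V] {N : ℕ} (v : Fin N → V)
    (c : Fin N → ℝ) (hc : ∀ i, c i ≠ 0) (hrel : ∑ i, c i • v i = 0) (k₀ : Fin N)
    (h0 : LinearIndependent ℝ (fun m : {m : Fin N // m ≠ k₀} => v m)) (k : Fin N) :
    LinearIndependent ℝ (fun m : {m : Fin N // m ≠ k} => v m) := by
  have key : ∀ (D : Fin N → ℝ) (j : Fin N), D j = 0 →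
      ∑ m : {m : Fin N // m ≠ j}, D m • v m = ∑ i, D i • v i := by
    intro D j hDj
    rw [← Finset.sum_erase_add Finset.univ _ (Finset.mem_univ j), hDj, zero_smul, add_zero]
    exact (Finset.sum_subtype (Finset.univ.erase j) (fun x => by simp [Finset.mem_erase]) (fun i => D i • v i)).symm
  rw [Fintype.linearIndependent_iff]
  intro d hd
  set D : Fin N → ℝ := fun i => if h : i = k then 0 else d ⟨i, h⟩ with hD
  have hDk : D k = 0 := by simp [hD]
  have hsumD : ∑ i, D i • v i = 0 := by
    rw [← key D k hDk, ← hd]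
    exact Finset.sum_congr rfl (fun m _ => by simp [hD, m.2])
  set r : ℝ := D k₀ / c k₀ with hr
  set E : Fin N → ℝ := fun i => D i - r * c i with hE
  have hEk₀ : E k₀ = 0 := by
    simp only [hE, hr]
    rw [div_mul_comm, div_self (hc k₀), one_mul, sub_self]
  have hsumE : ∑ i, E i • v i = 0 := by
    simp only [hE, sub_smul, mul_smul]
    rw [Finset.sum_sub_distrib, hsumD, ← Finset.smul_sum, hrel, smul_zero, sub_zero]
  have hE0 : ∀ i : Fin N, i ≠ k₀ → E i = 0 := by
    have := Fintype.linearIndependent_iff.1 h0 (fun m => E m) (by rw [key E k₀ hEk₀]; exact hsumE)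
    intro i hi; exact this ⟨i, hi⟩
  have hr0 : r = 0 := by
    by_cases hkk : k = k₀
    · subst hkk; rw [hr, hDk, zero_div]
    · have := hE0 k hkk
      rw [hE] at this
      simp only [hDk, zero_sub, neg_eq_zero] at this
      rcases mul_eq_zero.1 this with h | h
      · exact h
      · exact absurd h (hc k)
  have hD0 : ∀ i, D i = 0 := by
    intro i
    by_cases hik : i = k₀
    · subst hik
      have : D i = r * c i := by rw [hr, div_mul_cancel₀ _ (hc i)]
      rw [this, hr0, zero_mul]
    · have := hE0 i hik
      rw [hE] at this; simp only [hr0, zero_mul, sub_zero] at this; exact this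
  intro m
  have := hD0 m
  simpa [hD, m.2] using this


/-- Let `n ≥ 3`, `2 ≤ N₁ ≤ N₂`, `N₁ + N₂ ≤ n + 1`, and set `M = n - N₂`.
Consider the `n + 1` vectors of `ℝⁿ` (standard basis indexed from `0`): `e 0 + e 1`;
`e j - e (j+1)` for `1 ≤ j ≤ N₁ - 2`; `e (N₁-1) - e 0`; `e j - e (j+1)` for
`N₁ - 1 ≤ j ≤ M - 1`; `e M + e (M+1)`; `e j - e (j+1)` for `M + 1 ≤ j ≤ n - 2`; and
`e (n-1) - e M`.  Then any `n` of these `n + 1` vectors are linearly independent, and all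
`n + 1` together are linearly dependent.  (This is the normal system of a simplex
generating `D̃ₙ`: two cycles of lengths `N₁`, `N₂`, each with exactly one edge of type
`e i + e j`, joined by a path.) -/
theorem Dn_normal_system_generic_position {n : ℕ} (hn : 3 ≤ n) (N₁ N₂ : ℕ) (hN1 : 2 ≤ N₁)
    (hN12 : N₁ ≤ N₂) (hNn : N₁ + N₂ ≤ n + 1)
    (e : ℕ → EuclideanSpace ℝ (Fin n)) (he : ∀ i : Fin n, e i = EuclideanSpace.single i 1)
    (g : ℕ → EuclideanSpace ℝ (Fin n))
    (hg0 : g 0 = e 0 + e 1)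
    (hg1 : ∀ k : ℕ, 1 ≤ k → k ≤ N₁ - 2 → g k = e k - e (k + 1))
    (hg2 : g (N₁ - 1) = e (N₁ - 1) - e 0)
    (hg3 : ∀ k : ℕ, N₁ ≤ k → k ≤ n - N₂ → g k = e (k - 1) - e k)
    (hg4 : g (n - N₂ + 1) = e (n - N₂) + e (n - N₂ + 1))
    (hg5 : ∀ k : ℕ, n - N₂ + 2 ≤ k → k ≤ n - 1 → g k = e (k - 1) - e k)
    (hg6 : g n = e (n - 1) - e (n - N₂)) :
    (∀ k : Fin (n + 1),
      LinearIndependent ℝ (fun m : {m : Fin (n + 1) // m ≠ k} => g ((m : Fin (n + 1)) : ℕ))) ∧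
      ¬ LinearIndependent ℝ (fun k : Fin (n + 1) => g (k : ℕ)) := by
  set M := n - N₂ with hM
  have hM1 : 1 ≤ M := by omega
  have hMn : M + 2 ≤ n := by omega
  have hNM : N₁ - 1 ≤ M := by omega
  -- the dependence coefficients
  set c : ℕ → ℝ := fun k =>
    if k = 0 then 1 else if k ≤ N₁ - 2 then -1 else if k = N₁ - 1 then 1
    else if k ≤ M then -2 else if k = M + 1 then -1 else 1 with hc
  have hcne : ∀ k : ℕ, c k ≠ 0 := by
    intro k; simp only [hc]; split_ifs <;> norm_num
  -- the relation
  have hrel : ∑ k ∈ Finset.range (n + 1), c k • g k = 0 := by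
    rw [Finset.range_eq_Ico,
      ← Finset.sum_Ico_consecutive _ (show 0 ≤ 1 by omega) (show 1 ≤ n + 1 by omega),
      ← Finset.sum_Ico_consecutive _ (show 1 ≤ N₁ - 1 by omega) (show N₁ - 1 ≤ n + 1 by omega),
      ← Finset.sum_Ico_consecutive _ (show N₁ - 1 ≤ N₁ by omega) (show N₁ ≤ n + 1 by omega),
      ← Finset.sum_Ico_consecutive _ (show N₁ ≤ M + 1 by omega) (show M + 1 ≤ n + 1 by omega),
      ← Finset.sum_Ico_consecutive _ (show M + 1 ≤ M + 2 by omega) (show M + 2 ≤ n + 1 by omega),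
      ← Finset.sum_Ico_consecutive _ (show M + 2 ≤ n by omega) (show n ≤ n + 1 by omega)]
    have e0 : ∑ k ∈ Finset.Ico 0 1, c k • g k = e 0 + e 1 := by
      rw [show Finset.Ico 0 1 = {0} from rfl, Finset.sum_singleton]
      have : c 0 = 1 := by simp [hc]
      rw [this, hg0, one_smul]
    have e1 : ∑ k ∈ Finset.Ico 1 (N₁ - 1), c k • g k = -(e 1 - e (N₁ - 1)) := by
      rw [show ∑ k ∈ Finset.Ico 1 (N₁ - 1), c k • g k
          = ∑ k ∈ Finset.Ico 1 (N₁ - 1), -(e k - e (k + 1)) from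
        Finset.sum_congr rfl (fun k hk => by
          rw [Finset.mem_Ico] at hk
          have hck : c k = -1 := by
            simp only [hc]
            rw [if_neg (show ¬ (k = 0) by omega), if_pos (show k ≤ N₁ - 2 by omega)]
          rw [hck, hg1 k (by omega) (by omega), neg_one_smul])]
      rw [Finset.sum_neg_distrib, tele1 e (show 1 ≤ N₁ - 1 by omega)]
    have e2 : ∑ k ∈ Finset.Ico (N₁ - 1) N₁, c k • g k = e (N₁ - 1) - e 0 := by
      rw [show Finset.Ico (N₁ - 1) N₁ = {N₁ - 1} by
          ext x; simp only [Finset.mem_Ico, Finset.mem_singleton]; omega]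
      rw [Finset.sum_singleton]
      have : c (N₁ - 1) = 1 := by
        simp only [hc]
        rw [if_neg (show ¬ (N₁ - 1 = 0) by omega), if_neg (show ¬ (N₁ - 1 ≤ N₁ - 2) by omega),
          if_pos trivial]
      rw [this, hg2, one_smul]
    have e3 : ∑ k ∈ Finset.Ico N₁ (M + 1), c k • g k = (-2 : ℝ) • (e (N₁ - 1) - e M) := by
      rw [show ∑ k ∈ Finset.Ico N₁ (M + 1), c k • g k
          = ∑ k ∈ Finset.Ico N₁ (M + 1), (-2 : ℝ) • (e (k - 1) - e k) from
        Finset.sum_congr rfl (fun k hk => by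
          rw [Finset.mem_Ico] at hk
          have hck : c k = -2 := by
            simp only [hc]
            rw [if_neg (show ¬ (k = 0) by omega), if_neg (show ¬ (k ≤ N₁ - 2) by omega),
              if_neg (show ¬ (k = N₁ - 1) by omega), if_pos (show k ≤ M by omega)]
          rw [hck, hg3 k (by omega) (by omega)])]
      rw [← Finset.smul_sum, tele2 e (show N₁ ≤ M + 1 by omega),
        show M + 1 - 1 = M from rfl]
    have e4 : ∑ k ∈ Finset.Ico (M + 1) (M + 2), c k • g k = -(e M + e (M + 1)) := by
      rw [Nat.Ico_succ_singleton, Finset.sum_singleton]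
      have : c (M + 1) = -1 := by
        simp only [hc]
        rw [if_neg (show ¬ (M + 1 = 0) by omega), if_neg (show ¬ (M + 1 ≤ N₁ - 2) by omega),
          if_neg (show ¬ (M + 1 = N₁ - 1) by omega), if_neg (show ¬ (M + 1 ≤ M) by omega),
          if_pos trivial]
      rw [this, hg4, neg_one_smul]
    have e5 : ∑ k ∈ Finset.Ico (M + 2) n, c k • g k = e (M + 1) - e (n - 1) := by
      rw [show ∑ k ∈ Finset.Ico (M + 2) n, c k • g k
          = ∑ k ∈ Finset.Ico (M + 2) n, (e (k - 1) - e k) from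
        Finset.sum_congr rfl (fun k hk => by
          rw [Finset.mem_Ico] at hk
          have hck : c k = 1 := by
            simp only [hc]
            rw [if_neg (show ¬ (k = 0) by omega), if_neg (show ¬ (k ≤ N₁ - 2) by omega),
              if_neg (show ¬ (k = N₁ - 1) by omega), if_neg (show ¬ (k ≤ M) by omega),
              if_neg (show ¬ (k = M + 1) by omega)]
          rw [hck, hg5 k (by omega) (by omega), one_smul])]
      rw [tele2 e (show M + 2 ≤ n by omega), show M + 2 - 1 = M + 1 from rfl]
    have e6 : ∑ k ∈ Finset.Ico n (n + 1), c k • g k = e (n - 1) - e M := by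
      rw [Nat.Ico_succ_singleton, Finset.sum_singleton]
      have : c n = 1 := by
        simp only [hc]
        rw [if_neg (show ¬ (n = 0) by omega), if_neg (show ¬ (n ≤ N₁ - 2) by omega),
          if_neg (show ¬ (n = N₁ - 1) by omega), if_neg (show ¬ (n ≤ M) by omega),
          if_neg (show ¬ (n = M + 1) by omega)]
      rw [this, hg6, one_smul]
    rw [e0, e1, e2, e3, e4, e5, e6]
    rw [neg_smul, two_smul]
    abel
  -- span of the family omitting the last vector
  set k₀ : Fin (n + 1) := Fin.last n with hk₀
  set S : Submodule ℝ (EuclideanSpace ℝ (Fin n)) :=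
    Submodule.span ℝ (Set.range (fun m : {m : Fin (n + 1) // m ≠ k₀} => g ((m : Fin (n + 1)) : ℕ)))
    with hS
  have hgS : ∀ k : ℕ, k < n → g k ∈ S := by
    intro k hk
    refine Submodule.subset_span ⟨⟨⟨k, by omega⟩, fun hcon => ?_⟩, rfl⟩
    have hv := congrArg Fin.val hcon
    simp only [hk₀, Fin.val_last] at hv
    omega
  have he0S : e 0 ∈ S := by
    have hsum1 : ∑ k ∈ Finset.Ico 1 N₁, g k = e 1 - e 0 := by
      rw [← Finset.sum_Ico_consecutive _ (show 1 ≤ N₁ - 1 by omega) (show N₁ - 1 ≤ N₁ by omega)]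
      rw [show Finset.Ico (N₁ - 1) N₁ = {N₁ - 1} by
          ext x; simp only [Finset.mem_Ico, Finset.mem_singleton]; omega]
      rw [Finset.sum_singleton, hg2]
      rw [show ∑ k ∈ Finset.Ico 1 (N₁ - 1), g k
          = ∑ k ∈ Finset.Ico 1 (N₁ - 1), (e k - e (k + 1)) from
        Finset.sum_congr rfl (fun k hk => by
          rw [Finset.mem_Ico] at hk
          exact hg1 k (by omega) (by omega))]
      rw [tele1 e (show 1 ≤ N₁ - 1 by omega)]
      abel
    have key : e 0 = (2⁻¹ : ℝ) • (g 0 - ∑ k ∈ Finset.Ico 1 N₁, g k) := by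
      rw [hsum1, hg0, show e 0 + e 1 - (e 1 - e 0) = (2 : ℝ) • e 0 by
        rw [two_smul]; abel]
      rw [smul_smul]; norm_num
    rw [key]
    exact S.smul_mem _ (S.sub_mem (hgS 0 (by omega))
      (S.sum_mem (fun k hk => by
        rw [Finset.mem_Ico] at hk; exact hgS k (by omega))))
  have heS : ∀ j : ℕ, j < n → e j ∈ S := by
    intro j
    induction j using Nat.strong_induction_on with
    | _ j ih =>
      intro hj
      by_cases h0 : j = 0
      · rw [h0]; exact he0S
      by_cases h1 : j = 1
      · have : e 1 = g 0 - e 0 := by rw [hg0]; abel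
        rw [h1, this]
        exact S.sub_mem (hgS 0 (by omega)) he0S
      by_cases h2 : j ≤ N₁ - 1
      · have hgj := hg1 (j - 1) (by omega) (by omega)
        rw [show j - 1 + 1 = j by omega] at hgj
        have : e j = e (j - 1) - g (j - 1) := by rw [hgj]; abel
        rw [this]
        exact S.sub_mem (ih (j - 1) (by omega) (by omega)) (hgS (j - 1) (by omega))
      by_cases h3 : j ≤ M
      · have hgj := hg3 j (by omega) (by omega)
        have : e j = e (j - 1) - g j := by rw [hgj]; abel
        rw [this]
        exact S.sub_mem (ih (j - 1) (by omega) (by omega)) (hgS j (by omega))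
      by_cases h4 : j = M + 1
      · have : e (M + 1) = g (M + 1) - e M := by rw [hg4]; abel
        rw [h4, this]
        exact S.sub_mem (hgS (M + 1) (by omega)) (ih M (by omega) (by omega))
      · have hgj := hg5 j (by omega) (by omega)
        have : e j = e (j - 1) - g j := by rw [hgj]; abel
        rw [this]
        exact S.sub_mem (ih (j - 1) (by omega) (by omega)) (hgS j (by omega))
  have hLIbase :
      LinearIndependent ℝ (fun m : {m : Fin (n + 1) // m ≠ k₀} => g ((m : Fin (n + 1)) : ℕ)) := by
    apply linearIndependent_of_top_le_span_of_card_eq_finrank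
    · rw [← ((EuclideanSpace.basisFun (Fin n) ℝ).toBasis).span_eq]
      rw [Submodule.span_le]
      rintro x ⟨i, rfl⟩
      have hx : ((EuclideanSpace.basisFun (Fin n) ℝ).toBasis) i = e i := by
        rw [he i, OrthonormalBasis.coe_toBasis, EuclideanSpace.basisFun_apply]
      rw [hx]
      exact heS i i.isLt
    · rw [finrank_euclideanSpace_fin]
      rw [Fintype.card_subtype_compl, Fintype.card_subtype_eq, Fintype.card_fin]
      omega
  -- the relation as a `Fin (n+1)` sum
  have hrelFin : ∑ k : Fin (n + 1), c (k : ℕ) • g (k : ℕ) = 0 := by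
    rw [Fin.sum_univ_eq_sum_range (fun k => c k • g k)]
    exact hrel
  constructor
  · intro k
    exact transfer (fun i : Fin (n + 1) => g (i : ℕ)) (fun i : Fin (n + 1) => c (i : ℕ))
      (fun i => hcne i) hrelFin k₀ hLIbase k
  · intro hLI
    have := Fintype.linearIndependent_iff.1 hLI (fun k : Fin (n + 1) => c (k : ℕ)) hrelFin
      (0 : Fin (n + 1))
    exact hcne 0 (by simpa using this)
end
end

section
/- Let n ≥ 2 and let G be a simple graph on a vertex set of cardinality n+1 having exactly n+1 edges, such that every cycle of G has length at least n+1. Then G is isomorphic to the cycle graph on n+1 vertices. -/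
/-!
An acyclic graph on `N` vertices has fewer than `N` edges (it lies inside a spanning tree of the
complete graph), so `G` contains a cycle. That cycle has length at least `n + 1` by hypothesis and
at most the number of vertices, so it is Hamiltonian. Being a trail, it has `n + 1` distinct edges,
hence it uses every edge of `G`, and listing its vertices in order is an isomorphism from the cycle
graph onto `G`.
-/

namespace SimpleGraph

variable {V : Type*} {G : SimpleGraph V}

lemma IsAcyclic.ncard_edgeSet_lt [Finite V] [Nonempty V] (h : G.IsAcyclic) :
    G.edgeSet.ncard < Nat.card V := by
  obtain ⟨T, hGT, -, hT⟩ := connected_top.exists_isTree_le_of_le_of_isAcyclic le_top h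
  have hT_card := (isTree_iff_connected_and_card.mp hT).2
  have hGT_card := Set.ncard_le_ncard (edgeSet_mono hGT)
  rw [Nat.card_coe_set_eq] at hT_card
  omega

namespace Walk

variable {u v : V}

lemma IsCycle.length_le_card [Fintype V] {c : G.Walk u u} (hc : c.IsCycle) :
    c.length ≤ Fintype.card V := by
  rw [← length_tail_add_one hc.not_nil]
  exact hc.isPath_tail.length_lt

lemma IsTrail.mem_edges_of_ncard_edgeSet_le [Finite G.edgeSet] {w : G.Walk u v} (hw : w.IsTrail)
    (hlen : G.edgeSet.ncard ≤ w.length) {e : Sym2 V} (he : e ∈ G.edgeSet) : e ∈ w.edges := by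
  classical
  have hsub : (w.edges.toFinset : Set (Sym2 V)) ⊆ G.edgeSet :=
    fun e he ↦ w.edges_subset_edgeSet (by simpa using he)
  have hcard : (w.edges.toFinset : Set (Sym2 V)).ncard = w.length := by
    rw [Set.ncard_coe_finset, List.toFinset_card_of_nodup hw.edges_nodup, length_edges]
  have := Set.eq_of_subset_of_ncard_le hsub (hcard ▸ hlen)
  simpa [← this] using he

lemma getVert_mod_length (c : G.Walk u u) {k : ℕ} (hk : k ≤ c.length) :
    c.getVert (k % c.length) = c.getVert k := by
  rcases hk.lt_or_eq with hk | rfl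
  · rw [Nat.mod_eq_of_lt hk]
  · rw [Nat.mod_self, getVert_zero, getVert_length]

noncomputable def IsHamiltonianCycle.isoCycleGraph [Fintype V] [DecidableEq V] {c : G.Walk u u}
    {m : ℕ} (hc : c.IsHamiltonianCycle) (hlen : c.length = m + 2)
    (hE : ∀ e ∈ G.edgeSet, e ∈ c.edges) :
    cycleGraph (m + 2) ≃g G := by
  let f : Fin (m + 2) → V := fun i ↦ c.getVert i
  have hf_succ (i : Fin (m + 2)) : f (i + 1) = c.getVert (i + 1) := by
    simp only [f, Fin.val_add, Fin.val_one, ← hlen]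
    exact c.getVert_mod_length (by omega)
  have hf_inj : f.Injective := fun i j hij ↦
    Fin.ext <| hc.isCycle.getVert_injOn' (show (i : ℕ) ≤ c.length - 1 by omega)
      (show (j : ℕ) ≤ c.length - 1 by omega) hij
  have hf_bij : f.Bijective := by
    rw [Fintype.bijective_iff_injective_and_card]
    exact ⟨hf_inj, by rw [Fintype.card_fin, ← hlen, hc.length_eq]⟩
  have hf_index {k : ℕ} (hk : k < c.length) {i j : Fin (m + 2)} (hi : c.getVert k = f i)
      (hj : c.getVert (k + 1) = f j) : j = i + 1 := by
    have hik : i = ⟨k, hlen ▸ hk⟩ := hf_inj hi.symm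
    exact hf_inj (by rw [hf_succ, ← hj, hik])
  refine ⟨Equiv.ofBijective f hf_bij, fun {i j} ↦ ?_⟩
  simp only [Equiv.ofBijective_apply, cycleGraph_adj, sub_eq_iff_eq_add']
  constructor
  · intro hij
    obtain ⟨k, hk, hk_eq⟩ := (mk_mem_edges_iff_exists c).mp (hE _ hij)
    rcases Sym2.eq_iff.mp hk_eq with ⟨hi, hj⟩ | ⟨hj, hi⟩
    · exact Or.inr (hf_index hk hi hj)
    · exact Or.inl (hf_index hk hj hi)
  · rintro (rfl | rfl)
    · rw [hf_succ]; exact (c.adj_getVert_succ (by omega)).symm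
    · rw [hf_succ]; exact c.adj_getVert_succ (by omega)

end Walk

end SimpleGraph

open SimpleGraph Walk in
theorem graph_is_cycle_of_long_cycles_general {n : ℕ} {V : Type*} [Fintype V]
    (hV : Fintype.card V = n + 1) (G : SimpleGraph V)
    (hedges : G.edgeSet.ncard = n + 1)
    (hcyc : ∀ (x : V) (w : G.Walk x x), w.IsCycle → n + 1 ≤ w.length) :
    Nonempty (G ≃g SimpleGraph.cycleGraph (n + 1)) := by
  classical
  have : Nonempty V := Fintype.card_pos_iff.mp (by omega)
  have hcyclic : ¬ G.IsAcyclic := fun h ↦ by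
    have := h.ncard_edgeSet_lt
    rw [Nat.card_eq_fintype_card] at this
    omega
  obtain ⟨x, c, hc⟩ : ∃ (x : V) (c : G.Walk x x), c.IsCycle := by
    simpa [IsAcyclic] using hcyclic
  have hlen : c.length = n + 1 := le_antisymm (hV ▸ hc.length_le_card) (hcyc x c hc)
  have hham : c.IsHamiltonianCycle :=
    isHamiltonianCycle_iff_isCycle_and_length_eq.mpr ⟨hc, hlen.trans hV.symm⟩
  have hE (e) (he : e ∈ G.edgeSet) : e ∈ c.edges :=
    hc.isTrail.mem_edges_of_ncard_edgeSet_le (hedges.trans_le hlen.ge) he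
  obtain ⟨m, rfl⟩ : ∃ m, n = m + 1 := ⟨n - 1, by have := hc.three_le_length; omega⟩
  exact ⟨(hham.isoCycleGraph hlen hE).symm⟩

/-- A simple graph on `n + 1` vertices (`n ≥ 2`) with exactly `n + 1` edges,
all of whose cycles have length at least `n + 1`, is isomorphic to the cycle graph on `n + 1`
vertices. -/
theorem graph_is_cycle_of_long_cycles {n : ℕ} (hn : 2 ≤ n) {V : Type*} [Fintype V]
    (hV : Fintype.card V = n + 1) (G : SimpleGraph V)
    (hedges : G.edgeSet.ncard = n + 1)
    (hcyc : ∀ (x : V) (w : G.Walk x x), w.IsCycle → n + 1 ≤ w.length) :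
    Nonempty (G ≃g SimpleGraph.cycleGraph (n + 1)) :=
  graph_is_cycle_of_long_cycles_general hV G hedges hcyc
end

section
/- Let T be the triangle in the Euclidean plane E² = EuclideanSpace ℝ (Fin 2) with vertices A = (0,0), B = (1,0), C = (−1/2, √3/2); its angles are 2π/3 at A and π/6 at B and at C, so T is not a Coxeter triangle. Let G be the subgroup of the isometry group of E² generated by the three reflections in the lines AB, BC, CA (the affine spans of the corresponding pairs of vertices). Then G acts properly discontinuously on E²: for all compact sets K, L ⊆ E², only finitely many g ∈ G satisfy g(K) ∩ L ≠ ∅. (The triangle with angles (2π/3, π/6, π/6) generates the discrete reflection group G̃₂.) -/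
open scoped RealInnerProductSpace

noncomputable section

/-! The three reflections preserve the hexagonal lattice `Λ` spanned by `B` and `B + C`, which
contains `A`, `B` and `C`: the reflection in the line through `p` with direction `d` is
`x ↦ p + (2 * ⟪d, x - p⟫ / ‖d‖ ^ 2) • d - (x - p)`, so it preserves `Λ` as soon as `p, d ∈ Λ` and
the Cartan numbers `2 * ⟪d, v⟫ / ‖d‖ ^ 2` of a basis of `Λ` are integers.  An isometry of the plane
is affine, hence determined by its values at `0` and at a basis of `Λ`; if it preserves `Λ` and
moves a compact `K` to meet a compact `L`, these values are lattice points in a bounded region,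
of which there are only finitely many. -/

open Module Set Submodule

namespace IsometryEquiv

variable {α : Type*} [PseudoEMetricSpace α]

def stabilizer (S : Set α) : Subgroup (α ≃ᵢ α) where
  carrier := {g | g '' S = S}
  one_mem' := image_id S
  mul_mem' := by
    rintro g h (hg : g '' S = S) (hh : h '' S = S)
    change (g ∘ h) '' S = S
    rw [image_comp, hh, hg]
  inv_mem' := by
    rintro g (hg : g '' S = S)
    change g.symm '' S = S
    rw [g.image_symm]
    nth_rw 1 [← hg]
    exact g.injective.preimage_image S

theorem mem_stabilizer_of_mapsTo_of_involutive {S : Set α} {g : α ≃ᵢ α} (hS : MapsTo g S S)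
    (hg : Function.Involutive g) : g ∈ stabilizer S :=
  hS.image_subset.antisymm fun x hx => ⟨g x, hS hx, hg x⟩

end IsometryEquiv

section InnerProductSpace

variable {V : Type*} [NormedAddCommGroup V] [InnerProductSpace ℝ V]

namespace LinearIsometryEquiv

theorem eq_refl_or_eq_reflection {K : Submodule ℝ V} [K.HasOrthogonalProjection]
    (hK : finrank ℝ Kᗮ = 1) {f : V ≃ₗᵢ[ℝ] V} (hf : ∀ x ∈ K, f x = x) :
    f = LinearIsometryEquiv.refl ℝ V ∨ f = K.reflection := by
  obtain ⟨w, hw0, hw⟩ := finrank_eq_one_iff'.mp hK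
  have hmaps : ∀ v ∈ Kᗮ, f v ∈ Kᗮ := fun v hv k hk => by
    rw [← hf k hk, f.inner_map_map]; exact hv k hk
  obtain ⟨c, hc⟩ := hw ⟨f w, hmaps w w.2⟩
  have hfw : f w = c • (w : V) := (congrArg Subtype.val hc).symm
  have hperp : ∀ z ∈ Kᗮ, f z = c • z := by
    intro z hz
    obtain ⟨a, ha⟩ := hw ⟨z, hz⟩
    have hza : a • (w : V) = z := congrArg Subtype.val ha
    rw [← hza, map_smul, hfw, smul_comm]
  have hc1 : |c| = 1 := by
    have hw0' : ‖(w : V)‖ ≠ 0 := by simpa using hw0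
    have := congrArg norm hfw
    rw [f.norm_map, norm_smul, Real.norm_eq_abs] at this
    exact (mul_eq_right₀ hw0').mp this.symm
  rcases (abs_eq zero_le_one).mp hc1 with rfl | rfl
  · left
    ext x
    obtain ⟨y, hy, z, hz, rfl⟩ := K.exists_add_mem_mem_orthogonal x
    simp [hf y hy, hperp z hz]
  · right
    ext x
    obtain ⟨y, hy, z, hz, rfl⟩ := K.exists_add_mem_mem_orthogonal x
    rw [map_add, map_add, hf y hy, hperp z hz, K.reflection_mem_subspace_eq_self hy,
      K.reflection_mem_subspace_orthogonalComplement_eq_neg hz, neg_one_smul]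

end LinearIsometryEquiv

theorem Submodule.mapsTo_reflection_span_int {s : Set V} {d : V} (hd : d ∈ span ℤ s)
    (hs : ∀ v ∈ s, ∃ n : ℤ, 2 * ⟪d, v⟫ / ‖d‖ ^ 2 = n) :
    MapsTo (ℝ ∙ d).reflection (span ℤ s) (span ℤ s) := by
  show span ℤ s ≤ (span ℤ s).comap ((ℝ ∙ d).reflection.toLinearMap.restrictScalars ℤ)
  refine span_le.mpr fun v hv => ?_
  obtain ⟨n, hn⟩ := hs v hv
  change (ℝ ∙ d).reflection v ∈ span ℤ s
  rw [reflection_singleton_apply, RCLike.ofReal_real_eq_id, id, ← Nat.cast_smul_eq_nsmul ℝ,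
    smul_smul, Nat.cast_ofNat, ← mul_div_assoc, hn, Int.cast_smul_eq_zsmul]
  exact sub_mem (zsmul_mem hd n) (subset_span hv)

namespace IsometryEquiv

theorem apply_eq_reflection_of_apply_eq_self (hV : finrank ℝ V = 2) {g : V ≃ᵢ V} (hg : g ≠ 1)
    {p q : V} (hpq : p ≠ q) (hp : g p = p) (hq : g q = q) (x : V) :
    g x = p + (ℝ ∙ (q - p)).reflection (x - p) := by
  set f := g.toRealLinearIsometryEquiv
  have hf : ∀ y, g y = p + f (y - p) := fun y => by
    simp only [f, map_sub, toRealLinearIsometryEquiv_apply, hp]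
    abel
  have hd : f (q - p) = q - p := by rw [← add_right_inj p, ← hf, hq, add_sub_cancel]
  have hfix : ∀ y ∈ ℝ ∙ (q - p), f y = y := by
    intro y hy
    obtain ⟨a, rfl⟩ := mem_span_singleton.mp hy
    rw [map_smul, hd]
  have : Fact (finrank ℝ V = 1 + 1) := ⟨hV⟩
  have hK : finrank ℝ (ℝ ∙ (q - p))ᗮ = 1 :=
    finrank_orthogonal_span_singleton (sub_ne_zero.mpr hpq.symm)
  rcases LinearIsometryEquiv.eq_refl_or_eq_reflection hK hfix with h | h
  · refine absurd (IsometryEquiv.ext fun y => ?_) hg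
    rw [hf, h]
    simp
  · rw [hf, h]

end IsometryEquiv

end InnerProductSpace

section Lattice

variable {E ι : Type*} [NormedAddCommGroup E] [NormedSpace ℝ E]

theorem IsometryEquiv.injective_apply_zero_basis (b : Basis ι ℝ E) :
    Function.Injective fun g : E ≃ᵢ E => (g 0, fun i => g (b i)) := by
  intro g h hgh
  simp only [Prod.mk.injEq, funext_iff] at hgh
  obtain ⟨h0, hb⟩ := hgh
  have hlin : g.toRealLinearIsometryEquiv.toLinearMap = h.toRealLinearIsometryEquiv.toLinearMap :=
    b.ext fun i => by simp [hb i, h0]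
  ext x
  have := LinearMap.congr_fun hlin x
  simpa [h0] using this

theorem ZSpan.finite_setOf_mapsTo_image_inter_nonempty [Finite ι] (b : Basis ι ℝ E)
    {K L : Set E} (hK : Bornology.IsBounded K) (hL : Bornology.IsBounded L) :
    {g : E ≃ᵢ E | MapsTo g (span ℤ (range b)) (span ℤ (range b)) ∧
      (g '' K ∩ L).Nonempty}.Finite := by
  have : FiniteDimensional ℝ E := .of_basis b
  obtain ⟨rK, hrK⟩ := hK.subset_closedBall 0
  obtain ⟨rL, hrL⟩ := hL.subset_closedBall 0
  obtain ⟨rb, hrb⟩ := ((finite_range b).insert 0).isBounded.subset_closedBall 0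
  set T := Metric.closedBall (0 : E) (rb + rK + rL) ∩ span ℤ (range b)
  have hT : T.Finite := ZSpan.setFinite_inter b Metric.isBounded_closedBall
  refine ((hT.prod (Finite.pi fun _ => hT)).preimage
    (IsometryEquiv.injective_apply_zero_basis b).injOn).subset ?_
  rintro g ⟨hg, -, ⟨k, hk, rfl⟩, hgk⟩
  have hbound : ∀ y ∈ insert 0 (range b), g y ∈ T := fun y hy => by
    refine ⟨?_, hg ?_⟩
    · have hy := hrb hy
      have hk := hrK hk
      have hgk := hrL hgk
      rw [Metric.mem_closedBall] at hy hk hgk ⊢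
      calc dist (g y) 0 ≤ dist (g y) (g k) + dist (g k) 0 := dist_triangle _ _ _
        _ ≤ dist y 0 + dist k 0 + dist (g k) 0 := by
          rw [g.dist_eq]; gcongr; exact dist_triangle_right y k 0
        _ ≤ rb + rK + rL := by gcongr
    · rcases hy with rfl | ⟨i, rfl⟩
      exacts [zero_mem _, subset_span (mem_range_self i)]
  exact ⟨hbound 0 (mem_insert _ _),
    fun i _ => hbound (b i) (mem_insert_of_mem _ (mem_range_self i))⟩

end Lattice

theorem properlyDiscont_of_le_stabilizer_zspan {n : ℕ} {ι : Type*} [Finite ι]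
    (b : Basis ι ℝ (Euc n)) {G : Subgroup (Euc n ≃ᵢ Euc n)}
    (hG : G ≤ IsometryEquiv.stabilizer (span ℤ (range b) : Set (Euc n))) : ProperlyDiscont G :=
  fun _ _ hK hL => (ZSpan.finite_setOf_mapsTo_image_inter_nonempty b hK.isBounded
    hL.isBounded).subset fun _ ⟨hg, hKL⟩ => ⟨mapsTo_iff_image_subset.mpr (hG hg).subset, hKL⟩

theorem IsReflectionIn.mem_stabilizer_span_int {s : Set (Euc 2)} {p q : Euc 2}
    (hp : p ∈ span ℤ s) (hq : q ∈ span ℤ s) (hpq : p ≠ q)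
    (hs : ∀ v ∈ s, ∃ n : ℤ, 2 * ⟪q - p, v⟫ / ‖q - p‖ ^ 2 = n) {g : Euc 2 ≃ᵢ Euc 2}
    (hg : IsReflectionIn g (affineSpan ℝ {p, q})) : g ∈ IsometryEquiv.stabilizer (span ℤ s) := by
  have hform := IsometryEquiv.apply_eq_reflection_of_apply_eq_self finrank_euclideanSpace_fin hg.2
    hpq (hg.1 p (left_mem_affineSpan_pair ℝ p q)) (hg.1 q (right_mem_affineSpan_pair ℝ p q))
  refine IsometryEquiv.mem_stabilizer_of_mapsTo_of_involutive (fun x hx => ?_) fun x => ?_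
  · rw [hform]
    exact add_mem hp (mapsTo_reflection_span_int (sub_mem hq hp) hs (sub_mem hx hp))
  · rw [hform, hform, add_sub_cancel_left, reflection_reflection, add_sub_cancel]

def hexVec : Fin 2 → Euc 2 :=
  ![EuclideanSpace.single 0 1,
    (1 / 2 : ℝ) • EuclideanSpace.single 0 1 + (√3 / 2) • EuclideanSpace.single 1 1]

theorem hexVec_one_sub_hexVec_zero : hexVec 1 - hexVec 0 =
    (-(1 / 2) : ℝ) • EuclideanSpace.single (0 : Fin 2) (1 : ℝ) +
      (Real.sqrt 3 / 2) • EuclideanSpace.single (1 : Fin 2) (1 : ℝ) := by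
  simp only [hexVec, Matrix.cons_val_zero, Matrix.cons_val_one]
  module

theorem norm_hexVec (i : Fin 2) : ‖hexVec i‖ = 1 := by
  rw [EuclideanSpace.norm_eq, Real.sqrt_eq_one]
  fin_cases i <;> simp [hexVec, Fin.sum_univ_two, div_pow]
  norm_num

theorem inner_hexVec_self (i : Fin 2) : ⟪hexVec i, hexVec i⟫ = 1 := by
  rw [real_inner_self_eq_norm_sq, norm_hexVec, one_pow]

theorem inner_hexVec_zero_one : ⟪hexVec 0, hexVec 1⟫ = 1 / 2 := by
  simp [hexVec, EuclideanSpace.inner_single_left]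

theorem inner_hexVec_comb_zero (a b : ℝ) :
    ⟪a • hexVec 0 + b • hexVec 1, hexVec 0⟫ = a + b / 2 := by
  rw [inner_add_left, real_inner_smul_left, real_inner_smul_left, inner_hexVec_self,
    real_inner_comm, inner_hexVec_zero_one]
  ring

theorem inner_hexVec_comb_one (a b : ℝ) :
    ⟪a • hexVec 0 + b • hexVec 1, hexVec 1⟫ = a / 2 + b := by
  rw [inner_add_left, real_inner_smul_left, real_inner_smul_left, inner_hexVec_self,
    inner_hexVec_zero_one]
  ring

theorem norm_sq_hexVec_comb (a b : ℝ) :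
    ‖a • hexVec 0 + b • hexVec 1‖ ^ 2 = a ^ 2 + a * b + b ^ 2 := by
  rw [← real_inner_self_eq_norm_sq, inner_add_right, real_inner_smul_right, real_inner_smul_right,
    inner_hexVec_comb_zero, inner_hexVec_comb_one]
  ring

theorem linearIndependent_hexVec : LinearIndependent ℝ hexVec := by
  rw [show hexVec = ![hexVec 0, hexVec 1] by ext1 i; fin_cases i <;> rfl,
    LinearIndependent.pair_iff]
  intro a b hab
  have h0 := inner_hexVec_comb_zero a b
  have h1 := inner_hexVec_comb_one a b
  rw [hab, inner_zero_left] at h0 h1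
  constructor <;> linarith

def hexBasis : Basis (Fin 2) ℝ (Euc 2) :=
  basisOfLinearIndependentOfCardEqFinrank linearIndependent_hexVec (by simp)

theorem coe_hexBasis : ⇑hexBasis = hexVec := coe_basisOfLinearIndependentOfCardEqFinrank ..

def hexLattice : Submodule ℤ (Euc 2) := span ℤ (range hexBasis)

theorem hexVec_mem_hexLattice (i : Fin 2) : hexVec i ∈ hexLattice :=
  subset_span ⟨i, by rw [coe_hexBasis]⟩

/-- The divisibilities say that the Cartan numbers `2 * ⟪q - p, v⟫ / ‖q - p‖ ^ 2` of the basis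
vectors `v` are integers. -/
theorem IsReflectionIn.mem_stabilizer_hexLattice {p q : Euc 2} (hp : p ∈ hexLattice) (a b : ℤ)
    (hpq : q - p = (a : ℝ) • hexVec 0 + (b : ℝ) • hexVec 1) (hN : a ^ 2 + a * b + b ^ 2 ≠ 0)
    (h0 : a ^ 2 + a * b + b ^ 2 ∣ 2 * a + b) (h1 : a ^ 2 + a * b + b ^ 2 ∣ a + 2 * b)
    {g : Euc 2 ≃ᵢ Euc 2} (hg : IsReflectionIn g (affineSpan ℝ {p, q})) :
    g ∈ IsometryEquiv.stabilizer (hexLattice : Set (Euc 2)) := by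
  have hd : ‖q - p‖ ^ 2 = ((a ^ 2 + a * b + b ^ 2 : ℤ) : ℝ) := by
    rw [hpq, norm_sq_hexVec_comb]; push_cast; ring
  have hq : q ∈ hexLattice := by
    rw [← sub_add_cancel q p, hpq, Int.cast_smul_eq_zsmul, Int.cast_smul_eq_zsmul]
    exact add_mem (add_mem (zsmul_mem (hexVec_mem_hexLattice 0) a)
      (zsmul_mem (hexVec_mem_hexLattice 1) b)) hp
  refine hg.mem_stabilizer_span_int hp hq (fun h => hN ?_) ?_
  · rw [h, sub_self, norm_zero, zero_pow two_ne_zero] at hd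
    exact_mod_cast hd.symm
  have hN' : ((a ^ 2 + a * b + b ^ 2 : ℤ) : ℝ) ≠ 0 := by exact_mod_cast hN
  obtain ⟨m0, hm0⟩ := h0
  obtain ⟨m1, hm1⟩ := h1
  rw [coe_hexBasis, forall_mem_range, Fin.forall_fin_two, hd, hpq, inner_hexVec_comb_zero,
    inner_hexVec_comb_one]
  refine ⟨⟨m0, ?_⟩, ⟨m1, ?_⟩⟩ <;> rw [div_eq_iff hN']
  · push_cast
    linear_combination (by exact_mod_cast hm0 : (2 * a + b : ℝ) = (a ^ 2 + a * b + b ^ 2) * m0)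
  · push_cast
    linear_combination (by exact_mod_cast hm1 : (a + 2 * b : ℝ) = (a ^ 2 + a * b + b ^ 2) * m1)

/-- Let `T` be the triangle in the Euclidean plane with vertices
`A = (0, 0)`, `B = (1, 0)` and `C = (-1/2, √3/2)` (its angles are `2π/3` at `A` and `π/6` at
`B` and `C`, so `T` is not a Coxeter triangle).  The group generated by the reflections in the
three lines `AB`, `BC`, `CA` acts properly discontinuously on the plane: the triangle with
angles `(2π/3, π/6, π/6)` generates the discrete reflection group `G̃₂`. -/
theorem G2_triangle_discrete (A B C : Euc 2)
    (hA : A = 0)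
    (hB : B = EuclideanSpace.single (0 : Fin 2) (1 : ℝ))
    (hC : C = (-(1 / 2) : ℝ) • EuclideanSpace.single (0 : Fin 2) (1 : ℝ) +
      (Real.sqrt 3 / 2) • EuclideanSpace.single (1 : Fin 2) (1 : ℝ)) :
    ProperlyDiscont (Subgroup.closure
      {g : Euc 2 ≃ᵢ Euc 2 |
        IsReflectionIn g (affineSpan ℝ {A, B}) ∨
        IsReflectionIn g (affineSpan ℝ {B, C}) ∨
        IsReflectionIn g (affineSpan ℝ {C, A})}) := by
  subst hA hB hC
  rw [← hexVec_one_sub_hexVec_zero, show EuclideanSpace.single 0 1 = hexVec 0 from rfl]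
  refine properlyDiscont_of_le_stabilizer_zspan hexBasis ((Subgroup.closure_le _).mpr ?_)
  have hv := hexVec_mem_hexLattice
  rintro g (hg | hg | hg)
  · exact hg.mem_stabilizer_hexLattice (zero_mem _) 1 0 (by simp) (by decide) (by decide)
      (by decide)
  · exact hg.mem_stabilizer_hexLattice (hv 0) (-2) 1 (by push_cast; module) (by decide)
      (by decide) (by decide)
  · exact hg.mem_stabilizer_hexLattice (sub_mem (hv 1) (hv 0)) 1 (-1) (by push_cast; module)
      (by decide) (by decide) (by decide)
end
end
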